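/- arXiv:2405.03568 — 6 statements merged into one kernel-verified Lean document; each statement's English description precedes it below -/
import Mathlib

section
/- Let X = X_1 + ... + X_n be a sum of (not necessarily independent) Bernoulli random variables and Y = Y_1 + ... + Y_n a sum of independent Bernoulli random variables. If for each i, Pr[X_i = 1 | X_1, ..., X_{i-1}] ≤ Pr[Y_i = 1] (almost surely), then X is stochastically dominated by Y, i.e., Pr[X ≥ x] ≤ Pr[Y ≥ x] for all x ≥ 0. -/
/-!
Induct on the number of summands. Write `S_k` for the sum of the first `k` variables and
`p = Pr[Y_{k+1} = 1]`. Since `X_{k+1}` is Bernoulli,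
`Pr[S^X_{k+1} ≥ m+1] ≤ Pr[X_{k+1} = 1, S^X_k = m] + Pr[S^X_k ≥ m+1]`, and summing the
conditional bound over the histories with `S^X_k = m` bounds the first term by
`p Pr[S^X_k = m]`. Hence `Pr[S^X_{k+1} ≥ m+1] ≤ p Pr[S^X_k ≥ m] + (1-p) Pr[S^X_k ≥ m+1]`, with
equality for `Y` by independence; the right-hand side is monotone in the tails of `S_k`, so the
induction hypothesis closes the step.
-/

open MeasureTheory ProbabilityTheory Finset
open scoped ENNReal

lemma setOf_succ_le_add_subset {Ω : Type*} {B S : Ω → ℕ} (hB : ∀ ω, B ω ≤ 1) (m : ℕ) :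
    {ω | m + 1 ≤ B ω + S ω} ⊆ ({ω | B ω = 1} ∩ {ω | S ω = m}) ∪ {ω | m + 1 ≤ S ω} := by
  intro ω hω
  have := hB ω
  simp only [Set.mem_ofPred_eq, Set.mem_union, Set.mem_inter_iff] at hω ⊢
  omega

section Bernoulli

variable {Ω : Type*} [MeasurableSpace Ω] {μ : Measure Ω}

lemma measure_inter_preimage_le_mul_of_forall_singleton {α : Type*} [MeasurableSpace α]
    [Countable α] [MeasurableSingletonClass α] {f : Ω → α} (hf : Measurable f) {A : Set Ω}
    {p : ℝ≥0∞} (h : ∀ a, μ (A ∩ f ⁻¹' {a}) ≤ p * μ (f ⁻¹' {a})) (T : Set α) :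
    μ (A ∩ f ⁻¹' T) ≤ p * μ (f ⁻¹' T) := by
  have hunion : A ∩ f ⁻¹' T = ⋃ a : T, A ∩ f ⁻¹' {(a : α)} := by
    rw [← Set.inter_iUnion, ← Set.preimage_iUnion, Set.iUnion_of_singleton_coe]
  calc μ (A ∩ f ⁻¹' T) ≤ ∑' a : T, μ (A ∩ f ⁻¹' {(a : α)}) := hunion ▸ measure_iUnion_le _
    _ ≤ ∑' a : T, p * μ (f ⁻¹' {(a : α)}) := ENNReal.tsum_le_tsum fun a => h a
    _ = p * μ (f ⁻¹' T) := by
      rw [ENNReal.tsum_mul_left, tsum_measure_preimage_singleton T.to_countable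
        fun a _ => hf (measurableSet_singleton a)]

lemma measure_le_eq_measure_eq_add {S : Ω → ℕ} (hS : Measurable S) (m : ℕ) :
    μ {ω | m ≤ S ω} = μ {ω | S ω = m} + μ {ω | m + 1 ≤ S ω} := by
  have hunion : {ω | m ≤ S ω} = {ω | S ω = m} ∪ {ω | m + 1 ≤ S ω} := by
    ext ω; simp only [Set.mem_ofPred_eq, Set.mem_union]; omega
  have hdisj : Disjoint {ω | S ω = m} {ω | m + 1 ≤ S ω} :=
    Set.disjoint_left.2 fun ω h1 h2 => by simp only [Set.mem_ofPred_eq] at h1 h2; omega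
  rw [hunion, measure_union hdisj (hS measurableSet_Ici)]

lemma measure_eq_one_add_measure_eq_zero [IsProbabilityMeasure μ] {B : Ω → ℕ}
    (hB : Measurable B) (hB1 : ∀ ω, B ω ≤ 1) :
    μ {ω | B ω = 1} + μ {ω | B ω = 0} = 1 := by
  have hunion : {ω | B ω = 1} ∪ {ω | B ω = 0} = Set.univ := by
    ext ω
    have := hB1 ω
    simp only [Set.mem_union, Set.mem_ofPred_eq, Set.mem_univ, iff_true]
    omega
  have hdisj : Disjoint {ω | B ω = 1} {ω | B ω = 0} :=
    Set.disjoint_left.2 fun ω (h1 : B ω = 1) (h2 : B ω = 0) => by omega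
  rw [← measure_union hdisj (hB (measurableSet_singleton 0)), hunion, measure_univ]

lemma ProbabilityTheory.IndepFun.measure_succ_le_add {B S : Ω → ℕ} (hBS : IndepFun B S μ)
    (hB : Measurable B) (hS : Measurable S) (hB1 : ∀ ω, B ω ≤ 1) (m : ℕ) :
    μ {ω | m + 1 ≤ B ω + S ω}
      = μ {ω | B ω = 1} * μ {ω | m ≤ S ω} + μ {ω | B ω = 0} * μ {ω | m + 1 ≤ S ω} := by
  have hunion : {ω | m + 1 ≤ B ω + S ω}
      = ({ω | B ω = 1} ∩ {ω | m ≤ S ω}) ∪ ({ω | B ω = 0} ∩ {ω | m + 1 ≤ S ω}) := by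
    ext ω
    have := hB1 ω
    simp only [Set.mem_ofPred_eq, Set.mem_union, Set.mem_inter_iff]
    omega
  have hdisj : Disjoint ({ω | B ω = 1} ∩ {ω | m ≤ S ω}) ({ω | B ω = 0} ∩ {ω | m + 1 ≤ S ω}) :=
    Set.disjoint_left.2 fun ω h1 h2 => by
      simp only [Set.mem_ofPred_eq, Set.mem_inter_iff] at h1 h2
      omega
  have hprod (a b : ℕ) : μ ({ω | B ω = a} ∩ {ω | b ≤ S ω}) = μ {ω | B ω = a} * μ {ω | b ≤ S ω} :=
    hBS.measure_inter_preimage_eq_mul {a} (Set.Ici b) (measurableSet_singleton a) measurableSet_Ici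
  rw [hunion, measure_union hdisj ((hB (measurableSet_singleton 0)).inter (hS measurableSet_Ici)),
    hprod, hprod]

lemma measure_le_bernoulli_add_le_of_measure_le [IsProbabilityMeasure μ] {SX SY BX BY : Ω → ℕ}
    (hSX : Measurable SX) (hSY : Measurable SY) (hBY : Measurable BY)
    (hBX1 : ∀ ω, BX ω ≤ 1) (hBY1 : ∀ ω, BY ω ≤ 1) (hindep : IndepFun BY SY μ)
    (hcond : ∀ m, μ ({ω | BX ω = 1} ∩ {ω | SX ω = m}) ≤ μ {ω | BY ω = 1} * μ {ω | SX ω = m})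
    (hdom : ∀ x, μ {ω | x ≤ SX ω} ≤ μ {ω | x ≤ SY ω}) (x : ℕ) :
    μ {ω | x ≤ BX ω + SX ω} ≤ μ {ω | x ≤ BY ω + SY ω} := by
  obtain _ | m := x
  · simp
  set p := μ {ω | BY ω = 1}
  set q := μ {ω | BY ω = 0}
  calc μ {ω | m + 1 ≤ BX ω + SX ω}
      ≤ μ ({ω | BX ω = 1} ∩ {ω | SX ω = m}) + μ {ω | m + 1 ≤ SX ω} :=
        (measure_mono (setOf_succ_le_add_subset hBX1 m)).trans (measure_union_le _ _)
    _ ≤ p * μ {ω | SX ω = m} + (p + q) * μ {ω | m + 1 ≤ SX ω} := by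
        rw [measure_eq_one_add_measure_eq_zero hBY hBY1, one_mul]
        gcongr
        exact hcond m
    _ = p * μ {ω | m ≤ SX ω} + q * μ {ω | m + 1 ≤ SX ω} := by
        rw [measure_le_eq_measure_eq_add hSX m]; ring
    _ ≤ p * μ {ω | m ≤ SY ω} + q * μ {ω | m + 1 ≤ SY ω} :=
        add_le_add (mul_le_mul_right (hdom m) p) (mul_le_mul_right (hdom (m + 1)) q)
    _ = μ {ω | m + 1 ≤ BY ω + SY ω} := (hindep.measure_succ_le_add hBY hSY hBY1 m).symm

end Bernoulli

section History

variable {Ω : Type*} {n : ℕ}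

/-- Zero-padding beyond `i` makes the fibres of `history X i` exactly the events
`{ω | ∀ j < i, X j ω = v j}` (for `v` vanishing from `i` on) or empty. -/
def history (X : Fin n → Ω → ℕ) (i : Fin n) (ω : Ω) : Fin n → ℕ :=
  fun j => if j < i then X j ω else 0

lemma measurable_history [MeasurableSpace Ω] {X : Fin n → Ω → ℕ} (hX : ∀ j, Measurable (X j))
    (i : Fin n) : Measurable (history X i) := by
  refine measurable_pi_lambda _ fun j => ?_
  by_cases hj : j < i
  · simpa [history, hj] using hX j
  · simp [history, hj]

lemma history_preimage_singleton {X : Fin n → Ω → ℕ} {i : Fin n} {v : Fin n → ℕ}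
    (hv : ∀ j, i ≤ j → v j = 0) : history X i ⁻¹' {v} = {ω | ∀ j < i, X j ω = v j} := by
  ext ω
  simp only [Set.mem_preimage, Set.mem_singleton_iff, Set.mem_ofPred_eq, funext_iff, history]
  refine ⟨fun h j hj => by simpa [hj] using h j, fun h j => ?_⟩
  by_cases hj : j < i
  · simp [hj, h j hj]
  · simp [hj, hv j (not_lt.1 hj)]

lemma history_preimage_singleton_of_ne {X : Fin n → Ω → ℕ} {i j : Fin n} {v : Fin n → ℕ}
    (hij : i ≤ j) (hv : v j ≠ 0) : history X i ⁻¹' {v} = ∅ := by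
  refine Set.eq_empty_of_forall_notMem fun ω hω => hv ?_
  rw [Set.mem_preimage, Set.mem_singleton_iff] at hω
  simp [← hω, history, not_lt.2 hij]

lemma sum_eq_sum_history {X : Fin n → Ω → ℕ} {i : Fin n} {s : Finset (Fin n)}
    (hs : ∀ j ∈ s, j < i) (ω : Ω) : ∑ j ∈ s, X j ω = ∑ j ∈ s, history X i ω j :=
  Finset.sum_congr rfl fun j hj => by simp [history, hs j hj]

variable [MeasurableSpace Ω] {μ : Measure Ω} [IsFiniteMeasure μ]

lemma measure_inter_history_le {X : Fin n → Ω → ℕ} (hX : ∀ j, Measurable (X j)) {i : Fin n}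
    {A : Set Ω} {p : ℝ≥0∞}
    (hA : ∀ v : Fin n → ℕ, μ {ω | ∀ j < i, X j ω = v j} ≠ 0 → μ[|{ω | ∀ j < i, X j ω = v j}] A ≤ p)
    (v : Fin n → ℕ) : μ (A ∩ history X i ⁻¹' {v}) ≤ p * μ (history X i ⁻¹' {v}) := by
  by_cases hv : ∀ j, i ≤ j → v j = 0
  · have hE := measurable_history hX i (measurableSet_singleton v)
    rw [history_preimage_singleton hv] at hE ⊢
    by_cases h0 : μ {ω | ∀ j < i, X j ω = v j} = 0
    · simp [h0, measure_inter_null_of_null_right]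
    · rw [Set.inter_comm, ← cond_mul_eq_inter hE]
      gcongr
      exact hA v h0
  · push Not at hv
    obtain ⟨j, hij, hvj⟩ := hv
    simp [history_preimage_singleton_of_ne hij hvj]

lemma measure_inter_sum_eq_le {X : Fin n → Ω → ℕ} (hX : ∀ j, Measurable (X j)) {i : Fin n}
    {A : Set Ω} {p : ℝ≥0∞}
    (hA : ∀ v : Fin n → ℕ, μ {ω | ∀ j < i, X j ω = v j} ≠ 0 → μ[|{ω | ∀ j < i, X j ω = v j}] A ≤ p)
    {s : Finset (Fin n)} (hs : ∀ j ∈ s, j < i) (m : ℕ) :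
    μ (A ∩ {ω | ∑ j ∈ s, X j ω = m}) ≤ p * μ {ω | ∑ j ∈ s, X j ω = m} := by
  have hset : {ω | ∑ j ∈ s, X j ω = m} = history X i ⁻¹' {v | ∑ j ∈ s, v j = m} := by
    ext ω; simp [sum_eq_sum_history hs]
  rw [hset]
  exact measure_inter_preimage_le_mul_of_forall_singleton (measurable_history hX i)
    (measure_inter_history_le hX hA) _

end History

lemma filter_val_lt_succ {n k : ℕ} (hk : k < n) :
    univ.filter (fun j : Fin n => (j : ℕ) < k + 1)
      = insert ⟨k, hk⟩ (univ.filter (fun j : Fin n => (j : ℕ) < k)) := by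
  ext j
  simp only [mem_filter, mem_univ, true_and, mem_insert, Fin.ext_iff]
  omega

theorem measure_le_sum_prefix_le {Ω : Type*} [MeasurableSpace Ω] {μ : Measure Ω}
    [IsProbabilityMeasure μ] {n : ℕ} {X Y : Fin n → Ω → ℕ}
    (hX : ∀ i, Measurable (X i)) (hY : ∀ i, Measurable (Y i))
    (hXb : ∀ i ω, X i ω ≤ 1) (hYb : ∀ i ω, Y i ω ≤ 1) (hYindep : iIndepFun Y μ)
    (hcond : ∀ (i : Fin n) (v : Fin n → ℕ),
      μ {ω | ∀ j < i, X j ω = v j} ≠ 0 →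
      μ[|{ω | ∀ j < i, X j ω = v j}] {ω | X i ω = 1} ≤ μ {ω | Y i ω = 1})
    {k : ℕ} (hk : k ≤ n) (x : ℕ) :
    μ {ω | x ≤ ∑ j ∈ univ.filter (fun j : Fin n => (j : ℕ) < k), X j ω}
      ≤ μ {ω | x ≤ ∑ j ∈ univ.filter (fun j : Fin n => (j : ℕ) < k), Y j ω} := by
  induction k generalizing x with
  | zero => simp
  | succ k ih =>
    simp only [filter_val_lt_succ hk]
    set s := univ.filter (fun j : Fin n => (j : ℕ) < k)
    have hs : ∀ j ∈ s, j < ⟨k, hk⟩ := fun j hj => (mem_filter.1 hj).2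
    have hnotMem : (⟨k, hk⟩ : Fin n) ∉ s := fun h => lt_irrefl _ (hs _ h)
    have hindep : IndepFun (Y ⟨k, hk⟩) (fun ω => ∑ j ∈ s, Y j ω) μ := by
      simpa only [Finset.sum_fn] using (hYindep.indepFun_finsetSum_of_notMem hY hnotMem).symm
    simp only [sum_insert hnotMem]
    exact measure_le_bernoulli_add_le_of_measure_le (Finset.measurable_sum s fun j _ => hX j)
      (Finset.measurable_sum s fun j _ => hY j) (hY _) (hXb _) (hYb _) hindep
      (measure_inter_sum_eq_le hX (hcond _) hs) (ih (by omega)) x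

/-- If `X = X₁ + ⋯ + Xₙ` is a sum of (not necessarily independent) Bernoulli random
variables whose conditional probability of being 1 given the past is bounded above by
the success probability of independent Bernoulli variables `Yᵢ`, then `X` is
stochastically dominated by `Y = Y₁ + ⋯ + Yₙ`. -/
theorem stmt_0 {Ω : Type*} [MeasurableSpace Ω] (μ : Measure Ω) [IsProbabilityMeasure μ]
    (n : ℕ) (X Y : Fin n → Ω → ℕ)
    (hX : ∀ i, Measurable (X i)) (hY : ∀ i, Measurable (Y i))
    (hXb : ∀ i ω, X i ω ≤ 1) (hYb : ∀ i ω, Y i ω ≤ 1)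
    (hYindep : iIndepFun Y μ)
    (hcond : ∀ (i : Fin n) (v : Fin n → ℕ),
      μ {ω | ∀ j < i, X j ω = v j} ≠ 0 →
      μ[|{ω | ∀ j < i, X j ω = v j}] {ω | X i ω = 1} ≤ μ {ω | Y i ω = 1}) :
    ∀ x : ℕ, μ {ω | x ≤ ∑ i, X i ω} ≤ μ {ω | x ≤ ∑ i, Y i ω} := by
  intro x
  simpa only [filter_true_of_mem fun (j : Fin n) _ => j.isLt] using
    measure_le_sum_prefix_le hX hY hXb hYb hYindep hcond le_rfl x
end

section
/- Let N be a birth-death chain on ℕ with p(n) ≤ C/n and q(n) ≥ D for all n > 0 (constants C, D > 0), p(0) = q(0) = 0, started at state n. Then the expected extinction time E[E(n)] is Θ(n): it is at least n and at most C'·n for some constant C' depending only on C, D. -/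
open MeasureTheory ProbabilityTheory
open scoped ENNReal

/-- Extinction time (first hitting time of the absorbing state `0`) of a process
`N`, valued in `ℝ≥0∞` (it is `∞` if the process never hits `0`). -/
noncomputable def extinctionTime {Ω : Type*} (N : ℕ → Ω → ℕ) (ω : Ω) : ℝ≥0∞ :=
  ⨅ (t : ℕ) (_ : N t ω = 0), (t : ℝ≥0∞)

/-
Lower bound: almost surely the chain never jumps down by more than one, so it needs at least
`n` steps to reach `0`.

Upper bound: a Foster–Lyapunov argument. If `f ≥ 0` satisfies `P f + 1 ≤ f` away from `0`, where
`P` is the one-step transition operator, then `E f(N_{t+1}) + Pr(N_t ≠ 0) ≤ E f(N_t)`; summing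
over `t`, `E[T] ≤ ∑ₜ Pr(N_t ≠ 0) ≤ f(n)`. For a nice chain take `f(m) = g(1) + ⋯ + g(m)` with
`g(m) = 2/D` beyond `m₀ = ⌈2C/D⌉` and `g` defined backwards below `m₀` by `D g(m) = 1 + C g(m+1)`,
so that `(C/m) g(m+1) + 1 ≤ D g(m)`. Only finitely many values of `g` occur, so `f(n) = O(n)`.
-/

namespace MeasureTheory

variable {Ω β : Type*} [MeasurableSpace Ω] {μ : Measure Ω}

theorem lintegral_eq_tsum_setLIntegral_preimage [Countable β] [MeasurableSpace β]
    [MeasurableSingletonClass β] {X : Ω → β} (hX : Measurable X) (g : Ω → ℝ≥0∞) :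
    ∫⁻ ω, g ω ∂μ = ∑' b, ∫⁻ ω in X ⁻¹' {b}, g ω ∂μ := by
  rw [← lintegral_iUnion (fun b => hX (measurableSet_singleton b))
    (pairwise_disjoint_fiber X), ← Set.preimage_iUnion, Set.iUnion_of_singleton,
    Set.preimage_univ, Measure.restrict_univ]

theorem lintegral_comp_eq_sum_of_sum_measure_eq [IsFiniteMeasure μ] [Countable β]
    [MeasurableSpace β] [MeasurableSingletonClass β] {X : Ω → β} (hX : Measurable X)
    (s : Finset β) (hs : ∑ b ∈ s, μ (X ⁻¹' {b}) = μ Set.univ) (F : β → ℝ≥0∞) :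
    ∫⁻ ω, F (X ω) ∂μ = ∑ b ∈ s, F b * μ (X ⁻¹' {b}) := by
  have hmass : μ.map X s = μ.map X Set.univ := by
    rw [Measure.map_apply hX s.measurableSet, Measure.map_apply hX MeasurableSet.univ,
      ← sum_measure_preimage_singleton s fun b _ => hX (measurableSet_singleton b), hs,
      Set.preimage_univ]
  have hae : ∀ᵐ b ∂μ.map X, b ∈ (s : Set β) := by
    rw [ae_iff, ← Set.compl_def, measure_compl s.measurableSet (measure_ne_top _ _), hmass,
      tsub_self]
  rw [← lintegral_map (measurable_of_countable F) hX, ← Measure.restrict_eq_self_of_ae_mem hae,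
    lintegral_finset]
  simp_rw [Measure.map_apply hX (measurableSet_singleton _)]

end MeasureTheory

section BirthDeathChain

variable {Ω : Type*}

def trajectory (N : ℕ → Ω → ℕ) (t : ℕ) (ω : Ω) : Fin (t + 1) → ℕ := fun i => N i ω

theorem setOf_forall_le_eq_preimage_trajectory (N : ℕ → Ω → ℕ) (t : ℕ) (ω₀ : Ω) :
    {ω | ∀ s ≤ t, N s ω = N s ω₀} = trajectory N t ⁻¹' {trajectory N t ω₀} := by
  ext ω
  simp only [Set.mem_ofPred_eq, Set.mem_preimage, Set.mem_singleton_iff, funext_iff,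
    trajectory, Fin.forall_iff, Nat.lt_succ_iff]

theorem extinctionTime_le_tsum_indicator (N : ℕ → Ω → ℕ) (ω : Ω) :
    extinctionTime N ω ≤ ∑' t, {ω | N t ω ≠ 0}.indicator 1 ω := by
  by_cases h : ∃ t, N t ω = 0
  · calc extinctionTime N ω ≤ (Nat.find h : ℝ≥0∞) := iInf₂_le (Nat.find h) (Nat.find_spec h)
      _ = ∑ t ∈ Finset.range (Nat.find h), {ω | N t ω ≠ 0}.indicator 1 ω := by
        rw [Finset.sum_congr rfl fun t ht =>
          Set.indicator_of_mem (Nat.find_min h (Finset.mem_range.1 ht)) _]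
        simp
      _ ≤ _ := ENNReal.sum_le_tsum _
  · simp only [not_exists] at h
    simp [Set.indicator_of_mem, h]

variable [MeasurableSpace Ω]

theorem measurable_trajectory {N : ℕ → Ω → ℕ} (hN : ∀ t, Measurable (N t)) (t : ℕ) :
    Measurable (trajectory N t) :=
  measurable_pi_lambda _ fun i => hN i

theorem lintegral_extinctionTime_le_tsum {μ : Measure Ω} {N : ℕ → Ω → ℕ}
    (hN : ∀ t, Measurable (N t)) :
    ∫⁻ ω, extinctionTime N ω ∂μ ≤ ∑' t, μ {ω | N t ω ≠ 0} := by
  have hS : ∀ t, MeasurableSet {ω | N t ω ≠ 0} :=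
    fun t => (hN t (measurableSet_singleton 0)).compl
  calc ∫⁻ ω, extinctionTime N ω ∂μ ≤ ∫⁻ ω, ∑' t, {ω | N t ω ≠ 0}.indicator 1 ω ∂μ :=
        lintegral_mono (extinctionTime_le_tsum_indicator N)
    _ = ∑' t, μ {ω | N t ω ≠ 0} := by
        rw [lintegral_tsum fun t => (measurable_one.indicator (hS t)).aemeasurable]
        simp_rw [lintegral_indicator_one (hS _)]

structure IsBirthDeathChain (μ : Measure Ω) (N : ℕ → Ω → ℕ) (p q : ℕ → ℝ) : Prop where
  measurable : ∀ t, Measurable (N t)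
  p_nonneg : ∀ m, 0 ≤ p m
  q_nonneg : ∀ m, 0 ≤ q m
  add_le_one : ∀ m, p m + q m ≤ 1
  p_zero : p 0 = 0
  q_zero : q 0 = 0
  birth : ∀ (t : ℕ) (path : ℕ → ℕ),
    μ {ω | ∀ s ≤ t, N s ω = path s} ≠ 0 →
    μ[|{ω | ∀ s ≤ t, N s ω = path s}] {ω | N (t + 1) ω = path t + 1}
      = ENNReal.ofReal (p (path t))
  death : ∀ (t : ℕ) (path : ℕ → ℕ), 0 < path t →
    μ {ω | ∀ s ≤ t, N s ω = path s} ≠ 0 →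
    μ[|{ω | ∀ s ≤ t, N s ω = path s}] {ω | N (t + 1) ω = path t - 1}
      = ENNReal.ofReal (q (path t))
  hold : ∀ (t : ℕ) (path : ℕ → ℕ),
    μ {ω | ∀ s ≤ t, N s ω = path s} ≠ 0 →
    μ[|{ω | ∀ s ≤ t, N s ω = path s}] {ω | N (t + 1) ω = path t}
      = ENNReal.ofReal (1 - p (path t) - q (path t))

/-- The one-step transition operator `(P F)(m) = E[F(N_{t+1}) | N_t = m]`. At `m = 0` the
truncated `m - 1` is harmless since `q 0 = 0`. -/
noncomputable def stepMean (p q : ℕ → ℝ) (F : ℕ → ℝ≥0∞) (m : ℕ) : ℝ≥0∞ :=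
  ENNReal.ofReal (p m) * F (m + 1) + ENNReal.ofReal (q m) * F (m - 1)
    + ENNReal.ofReal (1 - p m - q m) * F m

theorem measure_inter_eq_of_cond {μ : Measure Ω} [IsFiniteMeasure μ] {A S : Set Ω}
    (hA : MeasurableSet A) {r : ℝ} (h : μ A ≠ 0 → μ[|A] S = ENNReal.ofReal r) :
    μ (A ∩ S) = ENNReal.ofReal r * μ A := by
  rcases eq_or_ne (μ A) 0 with h0 | h0
  · rw [h0, mul_zero, measure_inter_null_of_null_left S h0]
  · rw [← h h0, cond_mul_eq_inter hA]

namespace IsBirthDeathChain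

variable {μ : Measure Ω} {N : ℕ → Ω → ℕ} {p q : ℕ → ℝ}

theorem stepMean_one (hN : IsBirthDeathChain μ N p q) (m : ℕ) : stepMean p q 1 m = 1 := by
  have hpq := add_nonneg (hN.p_nonneg m) (hN.q_nonneg m)
  simp only [stepMean, Pi.one_apply, mul_one]
  rw [← ENNReal.ofReal_add (hN.p_nonneg m) (hN.q_nonneg m),
    ← ENNReal.ofReal_add hpq (by linarith [hN.add_le_one m])]
  simp

theorem setLIntegral_comp_succ [IsFiniteMeasure μ] (hN : IsBirthDeathChain μ N p q) (t : ℕ)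
    (ω₀ : Ω) (F : ℕ → ℝ≥0∞) :
    ∫⁻ ω in trajectory N t ⁻¹' {trajectory N t ω₀}, F (N (t + 1) ω) ∂μ
      = stepMean p q F (N t ω₀) * μ (trajectory N t ⁻¹' {trajectory N t ω₀}) := by
  set A := trajectory N t ⁻¹' {trajectory N t ω₀}
  have hA : MeasurableSet A :=
    measurable_trajectory hN.measurable t (measurableSet_singleton _)
  have hX := hN.measurable (t + 1)
  have transition : ∀ k r, (μ {ω | ∀ s ≤ t, N s ω = N s ω₀} ≠ 0 →
      μ[|{ω | ∀ s ≤ t, N s ω = N s ω₀}] {ω | N (t + 1) ω = k} = ENNReal.ofReal r) →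
      μ.restrict A (N (t + 1) ⁻¹' {k}) = ENNReal.ofReal r * μ A := fun k r h => by
    rw [Measure.restrict_apply (hX (measurableSet_singleton k)), Set.inter_comm]
    rw [setOf_forall_le_eq_preimage_trajectory] at h
    exact measure_inter_eq_of_cond hA h
  have birth := transition _ _ (hN.birth t _)
  have hold := transition _ _ (hN.hold t _)
  rcases Nat.eq_zero_or_pos (N t ω₀) with hm | hm
  · rw [hm, hN.p_zero, hN.q_zero, sub_zero, sub_zero, ENNReal.ofReal_one, one_mul] at hold
    rw [lintegral_comp_eq_sum_of_sum_measure_eq hX {0} (by simpa using hold)]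
    simp [stepMean, hm, hN.p_zero, hN.q_zero, hold]
  have death := transition _ _ (hN.death t _ hm)
  set m := N t ω₀
  have hmass := hN.stepMean_one m
  simp only [stepMean, Pi.one_apply, mul_one] at hmass
  have hsum : ∀ G : ℕ → ℝ≥0∞, ∑ k ∈ {m + 1, m - 1, m}, G k = G (m + 1) + G (m - 1) + G m :=
    fun G => by
      rw [Finset.sum_insert (by simp only [Finset.mem_insert, Finset.mem_singleton]; omega),
        Finset.sum_pair (by omega), add_assoc]
  rw [lintegral_comp_eq_sum_of_sum_measure_eq hX {m + 1, m - 1, m} (by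
    rw [hsum, birth, death, hold, ← add_mul, ← add_mul, hmass, one_mul,
      Measure.restrict_apply_univ]), hsum, birth, death, hold, stepMean]
  ring

theorem lintegral_comp_step [IsFiniteMeasure μ] (hN : IsBirthDeathChain μ N p q) (t : ℕ)
    (G : ℕ → ℕ → ℝ≥0∞) :
    ∫⁻ ω, G (N t ω) (N (t + 1) ω) ∂μ = ∫⁻ ω, stepMean p q (G (N t ω)) (N t ω) ∂μ := by
  have htraj := measurable_trajectory hN.measurable t
  rw [lintegral_eq_tsum_setLIntegral_preimage htraj,
    lintegral_eq_tsum_setLIntegral_preimage htraj]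
  refine tsum_congr fun v => ?_
  rcases (trajectory N t ⁻¹' {v}).eq_empty_or_nonempty with h | ⟨ω₀, rfl : trajectory N t ω₀ = v⟩
  · simp [h]
  set A := trajectory N t ⁻¹' {trajectory N t ω₀}
  have hA : MeasurableSet A := htraj (measurableSet_singleton _)
  have hlast : ∀ ω ∈ A, N t ω = N t ω₀ := fun ω hω => congrFun hω (Fin.last t)
  calc ∫⁻ ω in A, G (N t ω) (N (t + 1) ω) ∂μ = ∫⁻ ω in A, G (N t ω₀) (N (t + 1) ω) ∂μ :=
        setLIntegral_congr_fun hA fun ω hω => by rw [hlast ω hω]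
    _ = ∫⁻ _ in A, stepMean p q (G (N t ω₀)) (N t ω₀) ∂μ := by
        rw [hN.setLIntegral_comp_succ, setLIntegral_const]
    _ = ∫⁻ ω in A, stepMean p q (G (N t ω)) (N t ω) ∂μ :=
        setLIntegral_congr_fun hA fun ω hω => by rw [hlast ω hω]

theorem ae_le_succ_add_one [IsFiniteMeasure μ] (hN : IsBirthDeathChain μ N p q) :
    ∀ᵐ ω ∂μ, ∀ t, N t ω ≤ N (t + 1) ω + 1 := by
  refine ae_all_iff.2 fun t => ae_iff.2 ?_
  have hS : MeasurableSet {ω | ¬ N t ω ≤ N (t + 1) ω + 1} :=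
    (measurableSet_le (hN.measurable t) ((hN.measurable (t + 1)).add_const 1)).compl
  have hjump : ∀ m, stepMean p q (fun k => if k + 1 < m then 1 else 0) m = 0 := fun m => by
    simp only [stepMean]
    rw [if_neg (by omega), if_neg (by omega), if_neg (by omega)]
    simp
  have h := hN.lintegral_comp_step t fun m k => if k + 1 < m then 1 else 0
  simp only [hjump, lintegral_zero] at h
  rw [← lintegral_indicator_one hS, ← h]
  refine lintegral_congr fun ω => ?_
  simp only [Set.indicator_apply, Set.mem_ofPred_eq, Pi.one_apply, not_le]

theorem le_lintegral_extinctionTime [IsProbabilityMeasure μ] (hN : IsBirthDeathChain μ N p q)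
    {n : ℕ} (hstart : ∀ ω, N 0 ω = n) : (n : ℝ≥0∞) ≤ ∫⁻ ω, extinctionTime N ω ∂μ := by
  have hae : ∀ᵐ ω ∂μ, (n : ℝ≥0∞) ≤ extinctionTime N ω := by
    filter_upwards [hN.ae_le_succ_add_one] with ω hω
    have hdrop : ∀ t, n ≤ N t ω + t := fun t => by
      induction t with
      | zero => simp [hstart]
      | succ t ih => have := hω t; omega
    exact le_iInf₂ fun t ht => Nat.cast_le.2 (by simpa [ht] using hdrop t)
  simpa using lintegral_mono_ae hae

theorem lintegral_succ_add_measure_le [IsFiniteMeasure μ] (hN : IsBirthDeathChain μ N p q)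
    {f : ℕ → ℝ≥0∞} (hf : ∀ m, 0 < m → stepMean p q f m + 1 ≤ f m) (t : ℕ) :
    ∫⁻ ω, f (N (t + 1) ω) ∂μ + μ {ω | N t ω ≠ 0} ≤ ∫⁻ ω, f (N t ω) ∂μ := by
  have hS : MeasurableSet {ω | N t ω ≠ 0} := (hN.measurable t (measurableSet_singleton 0)).compl
  rw [hN.lintegral_comp_step t fun _ => f, ← lintegral_indicator_one hS,
    ← lintegral_add_right _ (measurable_one.indicator hS)]
  refine lintegral_mono fun ω => ?_
  rcases Nat.eq_zero_or_pos (N t ω) with h | h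
  · simp [h, stepMean, hN.p_zero, hN.q_zero]
  · simpa [h.ne'] using hf _ h

theorem tsum_measure_ne_zero_le [IsProbabilityMeasure μ] (hN : IsBirthDeathChain μ N p q)
    {n : ℕ} (hstart : ∀ ω, N 0 ω = n) {f : ℕ → ℝ≥0∞}
    (hf : ∀ m, 0 < m → stepMean p q f m + 1 ≤ f m) :
    ∑' t, μ {ω | N t ω ≠ 0} ≤ f n := by
  have hpartial : ∀ t, ∫⁻ ω, f (N t ω) ∂μ + ∑ s ∈ Finset.range t, μ {ω | N s ω ≠ 0} ≤ f n := by
    intro t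
    induction t with
    | zero => simp [hstart]
    | succ t ih =>
      calc ∫⁻ ω, f (N (t + 1) ω) ∂μ + ∑ s ∈ Finset.range (t + 1), μ {ω | N s ω ≠ 0}
          = (∫⁻ ω, f (N (t + 1) ω) ∂μ + μ {ω | N t ω ≠ 0})
            + ∑ s ∈ Finset.range t, μ {ω | N s ω ≠ 0} := by
            rw [Finset.sum_range_succ]; ring
        _ ≤ ∫⁻ ω, f (N t ω) ∂μ + ∑ s ∈ Finset.range t, μ {ω | N s ω ≠ 0} := by
            gcongr; exact hN.lintegral_succ_add_measure_le hf t
        _ ≤ f n := ih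
  rw [ENNReal.tsum_eq_iSup_nat]
  exact iSup_le fun t => le_add_self.trans (hpartial t)

theorem lintegral_extinctionTime_le [IsProbabilityMeasure μ] (hN : IsBirthDeathChain μ N p q)
    {n : ℕ} (hstart : ∀ ω, N 0 ω = n) {f : ℕ → ℝ≥0∞}
    (hf : ∀ m, 0 < m → stepMean p q f m + 1 ≤ f m) :
    ∫⁻ ω, extinctionTime N ω ∂μ ≤ f n :=
  (lintegral_extinctionTime_le_tsum hN.measurable).trans (hN.tsum_measure_ne_zero_le hstart hf)

end IsBirthDeathChain

end BirthDeathChain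

namespace NiceChain

variable {C D : ℝ}

/-- The increment `g(threshold C D - k)` of the Lyapunov function, `k` steps below the
threshold. -/
noncomputable def backwardIncrement (C D : ℝ) : ℕ → ℝ
  | 0 => 2 / D
  | k + 1 => (1 + C * backwardIncrement C D k) / D

noncomputable def threshold (C D : ℝ) : ℕ := ⌈2 * C / D⌉₊

noncomputable def increment (C D : ℝ) (m : ℕ) : ℝ := backwardIncrement C D (threshold C D - m)

noncomputable def lyapunov (C D : ℝ) (m : ℕ) : ℝ := ∑ j ∈ Finset.range m, increment C D (j + 1)

noncomputable def slope (C D : ℝ) : ℝ :=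
  ∑ k ∈ Finset.range (threshold C D + 1), backwardIncrement C D k

theorem backwardIncrement_pos (hC : 0 < C) (hD : 0 < D) : ∀ k, 0 < backwardIncrement C D k
  | 0 => div_pos two_pos hD
  | k + 1 => div_pos (by have := backwardIncrement_pos hC hD k; positivity) hD

theorem increment_pos (hC : 0 < C) (hD : 0 < D) (m : ℕ) : 0 < increment C D m :=
  backwardIncrement_pos hC hD _

theorem slope_pos (hC : 0 < C) (hD : 0 < D) : 0 < slope C D :=
  Finset.sum_pos (fun k _ => backwardIncrement_pos hC hD k) Finset.nonempty_range_add_one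

theorem increment_le_slope (hC : 0 < C) (hD : 0 < D) (m : ℕ) : increment C D m ≤ slope C D :=
  Finset.single_le_sum (f := backwardIncrement C D) (fun k _ => (backwardIncrement_pos hC hD k).le)
    (Finset.mem_range.2 (Nat.lt_succ_of_le (Nat.sub_le _ _)))

theorem lyapunov_nonneg (hC : 0 < C) (hD : 0 < D) (m : ℕ) : 0 ≤ lyapunov C D m :=
  Finset.sum_nonneg fun _ _ => (increment_pos hC hD _).le

theorem lyapunov_le (hC : 0 < C) (hD : 0 < D) (n : ℕ) : lyapunov C D n ≤ slope C D * n := by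
  calc lyapunov C D n ≤ ∑ _j ∈ Finset.range n, slope C D :=
        Finset.sum_le_sum fun j _ => increment_le_slope hC hD (j + 1)
    _ = slope C D * n := by simp [mul_comm]

theorem div_mul_increment_add_one_le (hC : 0 < C) (hD : 0 < D) {m : ℕ} (hm : 0 < m) :
    C / m * increment C D (m + 1) + 1 ≤ D * increment C D m := by
  have hm' : (1 : ℝ) ≤ m := Nat.one_le_cast.2 hm
  rcases le_or_gt (threshold C D) m with h | h
  · have hsub : ∀ k, m ≤ k → increment C D k = 2 / D := fun k hk => by
      rw [increment, Nat.sub_eq_zero_of_le (h.trans hk), backwardIncrement]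
    have hCm : 2 * C / D ≤ m := (Nat.le_ceil _).trans (Nat.cast_le.2 h)
    rw [hsub m le_rfl, hsub (m + 1) (Nat.le_succ m), mul_div_cancel₀ _ hD.ne']
    calc C / m * (2 / D) + 1 = 2 * C / D / m + 1 := by ring
      _ ≤ 1 + 1 := by gcongr; exact div_le_one_of_le₀ hCm (by positivity)
      _ = 2 := by norm_num
  · have hsub : threshold C D - m = (threshold C D - (m + 1)) + 1 := by omega
    rw [increment, increment, hsub, backwardIncrement, mul_div_cancel₀ _ hD.ne', add_comm 1]
    gcongr
    · exact (increment_pos hC hD _).le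
    · exact div_le_self hC.le hm'

theorem lyapunov_drift (hC : 0 < C) (hD : 0 < D) {m : ℕ} (hm : 0 < m) {p q : ℝ}
    (hp : p ≤ C / m) (hq : D ≤ q) :
    p * lyapunov C D (m + 1) + q * lyapunov C D (m - 1) + (1 - p - q) * lyapunov C D m + 1
      ≤ lyapunov C D m := by
  obtain ⟨k, rfl⟩ : ∃ k, m = k + 1 := ⟨m - 1, by omega⟩
  have hsucc : ∀ j, lyapunov C D (j + 1) = lyapunov C D j + increment C D (j + 1) :=
    fun j => Finset.sum_range_succ _ _
  have hdrift := div_mul_increment_add_one_le hC hD hm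
  have hg := increment_pos hC hD (k + 1)
  have hg' := increment_pos hC hD (k + 1 + 1)
  rw [hsucc (k + 1), Nat.add_sub_cancel, hsucc k]
  nlinarith

theorem stepMean_lyapunov_add_one_le (hC : 0 < C) (hD : 0 < D) {p q : ℕ → ℝ}
    (hp : ∀ m, 0 ≤ p m) (hq : ∀ m, 0 ≤ q m) (hpq : ∀ m, p m + q m ≤ 1) {m : ℕ} (hm : 0 < m)
    (hpC : p m ≤ C / m) (hqD : D ≤ q m) :
    stepMean p q (fun k => ENNReal.ofReal (lyapunov C D k)) m + 1
      ≤ ENNReal.ofReal (lyapunov C D m) := by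
  have hf := lyapunov_nonneg hC hD
  have hbirth := mul_nonneg (hp m) (hf (m + 1))
  have hdeath := mul_nonneg (hq m) (hf (m - 1))
  have hr : 0 ≤ 1 - p m - q m := by linarith [hpq m]
  have hhold := mul_nonneg hr (hf m)
  rw [stepMean, ← ENNReal.ofReal_mul (hp m), ← ENNReal.ofReal_mul (hq m),
    ← ENNReal.ofReal_mul hr, ← ENNReal.ofReal_add hbirth hdeath,
    ← ENNReal.ofReal_add (by positivity) hhold, ← ENNReal.ofReal_one,
    ← ENNReal.ofReal_add (by positivity) zero_le_one]
  exact ENNReal.ofReal_le_ofReal (lyapunov_drift hC hD hm hpC hqD)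

end NiceChain

/-- A nice birth-death chain started at `n` (birth probability `p(m) ≤ C/m`, death
probability `q(m) ≥ D`, `0` the unique absorbing state) has expected extinction time
`Θ(n)`: it is at least `n`, and at most `C'·n` for a constant `C'` depending only
on `C` and `D`. -/
theorem stmt_5 (C D : ℝ) (hC : 0 < C) (hD : 0 < D) :
    ∃ C' : ℝ, 0 < C' ∧
      ∀ (Ω : Type) (_ : MeasurableSpace Ω) (μ : Measure Ω), IsProbabilityMeasure μ →
      ∀ (N : ℕ → Ω → ℕ) (p q : ℕ → ℝ) (n : ℕ),
        (∀ t, Measurable (N t)) →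
        (∀ m, 0 ≤ p m) → (∀ m, 0 ≤ q m) → (∀ m, p m + q m ≤ 1) →
        p 0 = 0 → q 0 = 0 →
        (∀ m : ℕ, 0 < m → p m ≤ C / m) →
        (∀ m : ℕ, 0 < m → D ≤ q m) →
        (∀ ω, N 0 ω = n) →
        -- birth transitions, conditionally on any past trajectory
        (∀ (t : ℕ) (path : ℕ → ℕ),
          μ {ω | ∀ s ≤ t, N s ω = path s} ≠ 0 →
          μ[|{ω | ∀ s ≤ t, N s ω = path s}] {ω | N (t + 1) ω = path t + 1}
            = ENNReal.ofReal (p (path t))) →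
        -- death transitions
        (∀ (t : ℕ) (path : ℕ → ℕ), 0 < path t →
          μ {ω | ∀ s ≤ t, N s ω = path s} ≠ 0 →
          μ[|{ω | ∀ s ≤ t, N s ω = path s}] {ω | N (t + 1) ω = path t - 1}
            = ENNReal.ofReal (q (path t))) →
        -- holding steps
        (∀ (t : ℕ) (path : ℕ → ℕ),
          μ {ω | ∀ s ≤ t, N s ω = path s} ≠ 0 →
          μ[|{ω | ∀ s ≤ t, N s ω = path s}] {ω | N (t + 1) ω = path t}
            = ENNReal.ofReal (1 - p (path t) - q (path t))) →
        (n : ℝ≥0∞) ≤ ∫⁻ ω, extinctionTime N ω ∂μ ∧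
          ∫⁻ ω, extinctionTime N ω ∂μ ≤ ENNReal.ofReal C' * n := by
  refine ⟨NiceChain.slope C D, NiceChain.slope_pos hC hD, ?_⟩
  intro Ω _ μ _ N p q n hN hp hq hpq hp0 hq0 hpC hqD hstart hb hd hh
  have hchain : IsBirthDeathChain μ N p q := ⟨hN, hp, hq, hpq, hp0, hq0, hb, hd, hh⟩
  refine ⟨hchain.le_lintegral_extinctionTime hstart, ?_⟩
  calc ∫⁻ ω, extinctionTime N ω ∂μ ≤ ENNReal.ofReal (NiceChain.lyapunov C D n) :=
        hchain.lintegral_extinctionTime_le hstart fun m hm =>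
          NiceChain.stepMean_lyapunov_add_one_le hC hD hp hq hpq hm (hpC m hm) (hqD m hm)
    _ ≤ ENNReal.ofReal (NiceChain.slope C D * n) :=
        ENNReal.ofReal_le_ofReal (NiceChain.lyapunov_le hC hD n)
    _ = ENNReal.ofReal (NiceChain.slope C D) * n := by
        rw [ENNReal.ofReal_mul (NiceChain.slope_pos hC hD).le, ENNReal.ofReal_natCast]
end

section
/- For a nice birth-death chain started at state n and any constant k > 0, there exists a constant C(k) such that the number of births before extinction satisfies Pr[B(n) ≥ C(k)·(log n)^2] ≤ 1/n^k for all sufficiently large n. -/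
open MeasureTheory ProbabilityTheory
open scoped ENNReal

/-- Total number of birth (increment) steps of the process `N`. Since `0` is
absorbing and `p 0 = 0`, these are exactly the births before extinction. -/
noncomputable def birthCount {Ω : Type*} (N : ℕ → Ω → ℕ) (ω : Ω) : ℝ≥0∞ :=
  ∑' t : ℕ, if N (t + 1) ω = N t ω + 1 then 1 else 0

/-!
Give each state `m` the weight `F m = ∑_{j ≤ m} r ^ min j m₁`, whose increments decay
geometrically up to `m₁ ≈ C / r` and are constant beyond. With `λ = 1 + ε` for a small `ε`,
`λ ^ (births up to time T) * F (N T)` is a supermartingale: near `0` deaths (probability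
`≥ 2r`) outweigh births because the increment lost by a death is `1/r` times the one gained by
a birth; far from `0` births have probability `≤ r`. Markov's inequality then gives
`P(B(n) ≥ a) ≤ F n / λ ^ a ≤ (n + 1) / λ ^ a`, which is `≤ n ^ (-k)` for `a = ⌊(log n)²⌋`
and `n` large.
-/

open Filter Finset

noncomputable def lyapunov (r : ℝ) (m₁ m : ℕ) : ℝ := ∑ j ∈ range (m + 1), r ^ min j m₁

section Lyapunov

variable {r : ℝ} {m₁ : ℕ}

lemma lyapunov_succ (m : ℕ) :
    lyapunov r m₁ (m + 1) = lyapunov r m₁ m + r ^ min (m + 1) m₁ :=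
  sum_range_succ _ _

lemma one_le_lyapunov (hr : 0 ≤ r) (m : ℕ) : 1 ≤ lyapunov r m₁ m := by
  induction m with
  | zero => simp [lyapunov]
  | succ m ih => rw [lyapunov_succ]; linarith [pow_nonneg hr (min (m + 1) m₁)]

lemma lyapunov_le (hr : 0 ≤ r) (hr1 : r ≤ 1) (m : ℕ) : lyapunov r m₁ m ≤ m + 1 := by
  induction m with
  | zero => simp [lyapunov]
  | succ m ih =>
    rw [lyapunov_succ]; push_cast; linarith [pow_le_one₀ hr hr1 (n := min (m + 1) m₁)]

lemma mul_pow_min_le {p : ℝ} (hr : 0 ≤ r) (hp1 : p ≤ 1) (m : ℕ)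
    (hpr : m₁ ≤ m + 1 → p ≤ r) :
    p * r ^ min (m + 2) m₁ ≤ r * r ^ min (m + 1) m₁ := by
  rcases le_or_gt m₁ (m + 1) with h | h
  · rw [min_eq_right h, min_eq_right (by omega)]
    exact mul_le_mul_of_nonneg_right (hpr h) (pow_nonneg hr _)
  · rw [min_eq_left (by omega), min_eq_left h.le, ← pow_succ']
    exact mul_le_of_le_one_left (pow_nonneg hr _) hp1

lemma lyapunov_drift {K ε p q : ℝ} (hr : 0 ≤ r) (hr1 : r ≤ 1) (hε : 0 ≤ ε)
    (hεK : ε * (2 * (K + 1)) ≤ r ^ (m₁ + 1)) (hK : K ≤ r * m₁) (m : ℕ)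
    (hp : 0 ≤ p) (hp1 : p ≤ 1) (hpK : p * (m + 1) ≤ K) (hq : 2 * r ≤ q) :
    p * ((1 + ε) * lyapunov r m₁ (m + 2)) + q * lyapunov r m₁ m
        + (1 - p - q) * lyapunov r m₁ (m + 1) ≤ lyapunov r m₁ (m + 1) := by
  set L := lyapunov r m₁ (m + 1)
  set g₁ := r ^ min (m + 1) m₁
  set g₂ := r ^ min (m + 2) m₁
  have hL₂ : lyapunov r m₁ (m + 2) = L + g₂ := lyapunov_succ _
  have hL₁ : lyapunov r m₁ m = L - g₁ := by simp only [L, g₁, lyapunov_succ]; ring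
  have hg₁ : r ^ m₁ ≤ g₁ := pow_le_pow_of_le_one hr hr1 (min_le_right _ _)
  have hrg₁ : r * g₁ ≤ 1 := mul_le_one₀ hr1 (pow_nonneg hr _) (pow_le_one₀ hr hr1)
  have hK0 : 0 ≤ K := le_trans (by positivity) hpK
  have hpr : m₁ ≤ m + 1 → p ≤ r := fun h => by
    have : (m₁ : ℝ) ≤ m + 1 := by exact_mod_cast h
    nlinarith
  have hpL : p * L ≤ K + 1 := by
    have := lyapunov_le (m₁ := m₁) hr hr1 (m + 1)
    push_cast at this
    nlinarith
  suffices h : ε * (p * L) + (1 + ε) * (p * g₂) ≤ q * g₁ by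
    rw [hL₂, hL₁]; linarith
  calc ε * (p * L) + (1 + ε) * (p * g₂) ≤ ε * (K + 1) + (1 + ε) * (r * g₁) := by
        gcongr ε * ?_ + (1 + ε) * ?_
        exact mul_pow_min_le hr hp1 m hpr
    _ ≤ 2 * (ε * (K + 1)) + r * g₁ := by nlinarith
    _ ≤ r ^ (m₁ + 1) + r * g₁ := by linarith
    _ ≤ 2 * r * g₁ := by
        rw [pow_succ']
        nlinarith [mul_le_mul_of_nonneg_left hg₁ hr]
    _ ≤ q * g₁ := by gcongr

/-- `lam ^ (births so far) * F (current state)` is then a supermartingale. At `m = 0` the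
truncated `m - 1` is harmless for chains with `q 0 = 0`. -/
def TiltedSuperharmonic (p q : ℕ → ℝ) (lam : ℝ≥0∞) (F : ℕ → ℝ≥0∞) : Prop :=
  ∀ m, ENNReal.ofReal (p m) * (lam * F (m + 1)) + ENNReal.ofReal (q m) * F (m - 1)
    + ENNReal.ofReal (1 - p m - q m) * F m ≤ F m

lemma tiltedSuperharmonic_ofReal_lyapunov {p q : ℕ → ℝ} {K ε : ℝ} (hr : 0 ≤ r) (hr1 : r ≤ 1)
    (hε : 0 ≤ ε) (hεK : ε * (2 * (K + 1)) ≤ r ^ (m₁ + 1)) (hK : K ≤ r * m₁)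
    (hp : ∀ m, 0 ≤ p m) (hq : ∀ m, 0 ≤ q m) (hpq : ∀ m, p m + q m ≤ 1) (hp0 : p 0 = 0)
    (hq0 : q 0 = 0) (hpK : ∀ m : ℕ, 0 < m → p m ≤ K / m)
    (hqr : ∀ m : ℕ, 0 < m → 2 * r ≤ q m) :
    TiltedSuperharmonic p q (ENNReal.ofReal (1 + ε))
      (fun m => ENNReal.ofReal (lyapunov r m₁ m)) := by
  intro m
  cases m with
  | zero => simp [hp0, hq0]
  | succ m =>
    have hpK' : p (m + 1) * (m + 1) ≤ K := by
      have := hpK (m + 1) m.succ_pos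
      rwa [le_div_iff₀ (by positivity), Nat.cast_succ] at this
    have hp1 : p (m + 1) ≤ 1 := by linarith [hpq (m + 1), hq (m + 1)]
    have key := lyapunov_drift hr hr1 hε hεK hK m (hp _) hp1 hpK' (hqr _ m.succ_pos)
    have hL : ∀ j, 0 ≤ lyapunov r m₁ j := fun j => zero_le_one.trans (one_le_lyapunov hr j)
    have hrest : 0 ≤ 1 - p (m + 1) - q (m + 1) := by linarith [hpq (m + 1)]
    have hbirth : 0 ≤ p (m + 1) * ((1 + ε) * lyapunov r m₁ (m + 1 + 1)) :=
      mul_nonneg (hp _) (mul_nonneg (by linarith) (hL _))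
    rw [Nat.add_sub_cancel, ← ENNReal.ofReal_mul (by linarith), ← ENNReal.ofReal_mul (hp _),
      ← ENNReal.ofReal_mul (hq _), ← ENNReal.ofReal_mul hrest,
      ← ENNReal.ofReal_add hbirth (mul_nonneg (hq _) (hL m)),
      ← ENNReal.ofReal_add (add_nonneg hbirth (mul_nonneg (hq _) (hL m)))
        (mul_nonneg hrest (hL _))]
    exact ENNReal.ofReal_le_ofReal key

end Lyapunov

lemma log_natCast_add_one_le {n : ℕ} (hn : 0 < n) : Real.log (n + 1) ≤ Real.log n + 1 := by
  have hn' : (1 : ℝ) ≤ n := by exact_mod_cast hn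
  calc Real.log (n + 1) ≤ Real.log (n * Real.exp 1) :=
        Real.log_le_log (by positivity) (by nlinarith [Real.add_one_le_exp 1])
    _ = Real.log n + 1 := by rw [Real.log_mul (by positivity) (by positivity), Real.log_exp]

lemma eventually_add_one_div_pow_floor_log_sq_le {b : ℝ} (hb : 1 < b) (k : ℝ) :
    ∀ᶠ n : ℕ in atTop, ((n : ℝ) + 1) / b ^ ⌊Real.log n ^ 2⌋₊ ≤ 1 / (n : ℝ) ^ k := by
  set c := Real.log b
  have hc : 0 < c := Real.log_pos hb
  have hlog : Tendsto (fun n : ℕ => Real.log n) atTop atTop :=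
    Real.tendsto_log_atTop.comp tendsto_natCast_atTop_atTop
  filter_upwards [hlog.eventually_ge_atTop (max ((k + 2 + c) / c) 1)] with n hn
  set L := Real.log n
  have hL1 : 1 ≤ L := le_of_max_le_right hn
  have hcL : k + 2 + c ≤ c * L := by
    have := le_of_max_le_left hn
    rwa [div_le_iff₀ hc, mul_comm] at this
  have hn0 : 0 < n := Nat.pos_of_ne_zero (by rintro rfl; simp [L] at hL1; linarith)
  have hnR : (0 : ℝ) < n := by exact_mod_cast hn0
  have ha : L ^ 2 - 1 ≤ ⌊L ^ 2⌋₊ := by linarith [Nat.lt_floor_add_one (L ^ 2)]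
  rw [← Real.exp_log (by positivity : (0 : ℝ) < n + 1), ← Real.exp_log (by positivity : 0 < b),
    ← Real.exp_nat_mul, Real.rpow_def_of_pos hnR, ← Real.exp_sub, one_div, ← Real.exp_neg,
    Real.exp_le_exp]
  have := log_natCast_add_one_le hn0
  nlinarith [mul_le_mul_of_nonneg_right ha hc.le,
    mul_le_mul_of_nonneg_left hcL (by linarith : 0 ≤ L)]

def birthsBefore (x : ℕ → ℕ) (T : ℕ) : ℕ :=
  ∑ s ∈ range T, if x (s + 1) = x s + 1 then 1 else 0

lemma birthsBefore_succ (x : ℕ → ℕ) (T : ℕ) :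
    birthsBefore x (T + 1) = birthsBefore x T + if x (T + 1) = x T + 1 then 1 else 0 :=
  sum_range_succ _ _

lemma birthsBefore_congr {x y : ℕ → ℕ} {T : ℕ} (h : ∀ s ≤ T, x s = y s) :
    birthsBefore x T = birthsBefore y T :=
  sum_congr rfl fun s hs => by
    rw [h s (mem_range.1 hs).le, h (s + 1) (mem_range.1 hs)]

lemma birthsBefore_mono (x : ℕ → ℕ) : Monotone (birthsBefore x) :=
  fun _ _ h => sum_le_sum_of_subset (range_subset_range.2 h)

lemma birthCount_eq_iSup {Ω : Type*} (N : ℕ → Ω → ℕ) (ω : Ω) :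
    birthCount N ω = ⨆ T, (birthsBefore (N · ω) T : ℝ≥0∞) := by
  rw [birthCount, ENNReal.tsum_eq_iSup_nat]
  congr! with T
  simp only [birthsBefore, Nat.cast_sum, Nat.cast_ite, Nat.cast_one, Nat.cast_zero]

lemma exists_le_of_natCast_le_iSup {f : ℕ → ℕ} {a : ℕ}
    (h : (a : ℝ≥0∞) ≤ ⨆ T, (f T : ℝ≥0∞)) :
    ∃ T, a ≤ f T := by
  rcases Nat.eq_zero_or_pos a with rfl | ha
  · exact ⟨0, Nat.zero_le _⟩
  obtain ⟨T, hT⟩ := lt_iSup_iff.1 (lt_of_lt_of_le (Nat.cast_lt.2 (Nat.sub_lt ha one_pos)) h)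
  exact ⟨T, by have := Nat.cast_lt.1 hT; omega⟩

section BirthDeathChain

variable {Ω : Type*} [MeasurableSpace Ω]

def pathCylinder (N : ℕ → Ω → ℕ) (t : ℕ) (x : ℕ → ℕ) : Set Ω := {ω | ∀ s ≤ t, N s ω = x s}

lemma measurableSet_pathCylinder {N : ℕ → Ω → ℕ} (hN : ∀ t, Measurable (N t)) (t : ℕ)
    (x : ℕ → ℕ) :
    MeasurableSet (pathCylinder N t x) := by
  simp only [pathCylinder, Set.ofPred_forall]
  exact .iInter fun s => .iInter fun _ => measurableSet_eq_fun (hN s) measurable_const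

lemma lintegral_eq_tsum_setLIntegral_pathCylinder {μ : Measure Ω} {N : ℕ → Ω → ℕ}
    (hN : ∀ t, Measurable (N t)) (t : ℕ) (g : Ω → ℝ≥0∞) :
    ∫⁻ ω, g ω ∂μ = ∑' i : Fin (t + 1) → ℕ,
      ∫⁻ ω in pathCylinder N t (fun s => i (Fin.ofNat (t + 1) s)), g ω ∂μ := by
  set Y : Ω → Fin (t + 1) → ℕ := fun ω k => N k ω
  have hY : Measurable Y := measurable_pi_lambda _ fun k => hN k
  have hcyl : ∀ i, Y ⁻¹' {i} = pathCylinder N t (fun s => i (Fin.ofNat (t + 1) s)) := by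
    intro i
    ext ω
    simp only [Set.mem_preimage, Set.mem_singleton_iff, pathCylinder, funext_iff, Y]
    refine ⟨fun h s hs => ?_, fun h k => ?_⟩
    · rw [← h, Fin.val_ofNat, Nat.mod_eq_of_lt (Nat.lt_succ_of_le hs)]
    · rw [h k (Nat.lt_succ_iff.1 k.isLt), Fin.ofNat_val_eq_self]
  calc ∫⁻ ω, g ω ∂μ = ∫⁻ ω in ⋃ i, Y ⁻¹' {i}, g ω ∂μ := by
        rw [← Set.preimage_iUnion, Set.iUnion_of_singleton, Set.preimage_univ, setLIntegral_univ]
    _ = _ := by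
        rw [lintegral_iUnion (fun i => hY (measurableSet_singleton i)) (pairwise_disjoint_fiber Y)]
        simp_rw [hcyl]

lemma lintegral_comp_eq_sum_of_sum_measure_eq_one {ν : Measure Ω} [IsProbabilityMeasure ν]
    {X : Ω → ℕ} (hX : Measurable X) {s : Finset ℕ} (hs : ∑ j ∈ s, ν {ω | X ω = j} = 1)
    (f : ℕ → ℝ≥0∞) : ∫⁻ ω, f (X ω) ∂ν = ∑ j ∈ s, f j * ν {ω | X ω = j} := by
  have hnull : ∀ j ∉ s, ν {ω | X ω = j} = 0 := by
    have hcompl : ν (X ⁻¹' ↑s)ᶜ = 0 := by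
      rw [prob_compl_eq_one_sub (hX s.measurableSet), ← sum_measure_preimage_singleton s
        (fun j _ => hX (measurableSet_singleton j))]
      exact tsub_eq_zero_of_le hs.ge
    exact fun j hj => measure_mono_null (fun ω (hω : X ω = j) => by simp [hω, hj]) hcompl
  rw [← lintegral_map measurable_from_nat hX, lintegral_countable', tsum_eq_sum]
  · refine sum_congr rfl fun j _ => ?_
    rw [Measure.map_apply hX (measurableSet_singleton j)]
    rfl
  · intro j hj
    rw [Measure.map_apply hX (measurableSet_singleton j)]
    simp [Set.preimage, hnull j hj]

structure IsBirthDeathChain_s8 (μ : Measure Ω) (N : ℕ → Ω → ℕ) (p q : ℕ → ℝ) : Prop where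
  measurable : ∀ t, Measurable (N t)
  birth_nonneg : ∀ m, 0 ≤ p m
  death_nonneg : ∀ m, 0 ≤ q m
  birth_add_death_le_one : ∀ m, p m + q m ≤ 1
  birth_zero : p 0 = 0
  death_zero : q 0 = 0
  birth : ∀ t x, μ (pathCylinder N t x) ≠ 0 →
    μ[|pathCylinder N t x] {ω | N (t + 1) ω = x t + 1} = ENNReal.ofReal (p (x t))
  death : ∀ t x, 0 < x t → μ (pathCylinder N t x) ≠ 0 →
    μ[|pathCylinder N t x] {ω | N (t + 1) ω = x t - 1} = ENNReal.ofReal (q (x t))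
  hold : ∀ t x, μ (pathCylinder N t x) ≠ 0 →
    μ[|pathCylinder N t x] {ω | N (t + 1) ω = x t} = ENNReal.ofReal (1 - p (x t) - q (x t))

namespace IsBirthDeathChain_s8

variable {μ : Measure Ω} {N : ℕ → Ω → ℕ} {p q : ℕ → ℝ}

lemma lintegral_cond_pathCylinder [IsFiniteMeasure μ] (h : IsBirthDeathChain_s8 μ N p q) {t : ℕ}
    {x : ℕ → ℕ} (hx : μ (pathCylinder N t x) ≠ 0) (f : ℕ → ℝ≥0∞) :
    ∫⁻ ω, f (N (t + 1) ω) ∂μ[|pathCylinder N t x] =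
      ENNReal.ofReal (p (x t)) * f (x t + 1) + ENNReal.ofReal (q (x t)) * f (x t - 1)
        + ENNReal.ofReal (1 - p (x t) - q (x t)) * f (x t) := by
  have := cond_isProbabilityMeasure hx
  have hb := h.birth t x hx
  have hh := h.hold t x hx
  obtain hm | hm := Nat.eq_zero_or_pos (x t)
  · rw [hm, h.birth_zero, h.death_zero] at hh ⊢
    rw [sub_zero, sub_zero, ENNReal.ofReal_one] at hh
    rw [lintegral_comp_eq_sum_of_sum_measure_eq_one (h.measurable _) (s := {0}) (by simpa using hh)]
    simp [hh]
  · have hd := h.death t x hm hx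
    have hp := h.birth_nonneg (x t)
    have hq := h.death_nonneg (x t)
    have hpq := h.birth_add_death_le_one (x t)
    rw [lintegral_comp_eq_sum_of_sum_measure_eq_one (h.measurable _) (s := {x t + 1, x t - 1, x t})]
    · rw [sum_insert (by simp; omega), sum_insert (by simp; omega), sum_singleton, hb, hd, hh]
      ring
    · rw [sum_insert (by simp; omega), sum_insert (by simp; omega), sum_singleton, hb, hd, hh,
        ← add_assoc, ← ENNReal.ofReal_add hp hq, ← ENNReal.ofReal_add (by linarith) (by linarith)]
      simp


lemma measurable_birthsBefore (h : IsBirthDeathChain_s8 μ N p q) (T : ℕ) :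
    Measurable fun ω => birthsBefore (N · ω) T :=
  Finset.measurable_sum _ fun s _ => Measurable.ite
    (measurableSet_eq_fun (h.measurable _) ((h.measurable s).add_const 1)) measurable_const
    measurable_const

lemma setLIntegral_pathCylinder_succ_le [IsFiniteMeasure μ] (h : IsBirthDeathChain_s8 μ N p q)
    {lam : ℝ≥0∞} {F : ℕ → ℝ≥0∞}
    (hF : TiltedSuperharmonic p q lam F) (t : ℕ) (x : ℕ → ℕ) :
    ∫⁻ ω in pathCylinder N t x, lam ^ birthsBefore (N · ω) (t + 1) * F (N (t + 1) ω) ∂μ ≤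
      ∫⁻ ω in pathCylinder N t x, lam ^ birthsBefore (N · ω) t * F (N t ω) ∂μ := by
  set A := pathCylinder N t x
  have hA : MeasurableSet A := measurableSet_pathCylinder h.measurable t x
  by_cases hA0 : μ A = 0
  · simp [setLIntegral_measure_zero _ _ hA0]
  set b := birthsBefore x t
  set w : ℕ → ℝ≥0∞ := fun j => (if j = x t + 1 then lam else 1) * F j
  have hsucc : ∀ ω ∈ A,
      lam ^ birthsBefore (N · ω) (t + 1) * F (N (t + 1) ω) = lam ^ b * w (N (t + 1) ω) := by
    intro ω hω
    rw [birthsBefore_succ, birthsBefore_congr hω, hω t le_rfl]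
    split_ifs with hj <;> simp [w, b, hj, pow_succ, mul_assoc]
  have hcur : ∀ ω ∈ A, lam ^ birthsBefore (N · ω) t * F (N t ω) = lam ^ b * F (x t) := by
    intro ω hω
    rw [birthsBefore_congr hω, hω t le_rfl]
  have hcond : ∫⁻ ω in A, w (N (t + 1) ω) ∂μ = μ A * ∫⁻ ω, w (N (t + 1) ω) ∂μ[|A] := by
    rw [ProbabilityTheory.cond, lintegral_smul_measure, smul_eq_mul, ← mul_assoc,
      ENNReal.mul_inv_cancel hA0 (measure_ne_top _ _), one_mul]
  have hwm : Measurable fun ω => w (N (t + 1) ω) :=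
    (measurable_from_nat (f := w)).comp (h.measurable (t + 1))
  rw [setLIntegral_congr_fun hA hsucc, setLIntegral_congr_fun hA hcur,
    lintegral_const_mul _ hwm, setLIntegral_const, hcond,
    h.lintegral_cond_pathCylinder hA0]
  simp only [w, if_true, if_neg (by omega : x t - 1 ≠ x t + 1),
    if_neg (by omega : x t ≠ x t + 1), one_mul]
  calc lam ^ b * (μ A * _) ≤ lam ^ b * (μ A * F (x t)) := by gcongr; exact hF (x t)
    _ = lam ^ b * F (x t) * μ A := by ring

lemma lintegral_pow_birthsBefore_mul_le [IsProbabilityMeasure μ] (h : IsBirthDeathChain_s8 μ N p q)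
    {lam : ℝ≥0∞} {F : ℕ → ℝ≥0∞}
    (hF : TiltedSuperharmonic p q lam F)
    {n : ℕ} (hN0 : ∀ ω, N 0 ω = n) (T : ℕ) :
    ∫⁻ ω, lam ^ birthsBefore (N · ω) T * F (N T ω) ∂μ ≤ F n := by
  induction T with
  | zero => simp [birthsBefore, hN0]
  | succ t ih =>
    refine le_trans ?_ ih
    rw [lintegral_eq_tsum_setLIntegral_pathCylinder (μ := μ) h.measurable t,
      lintegral_eq_tsum_setLIntegral_pathCylinder (μ := μ) h.measurable t]
    exact ENNReal.tsum_le_tsum fun i => h.setLIntegral_pathCylinder_succ_le hF t _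

lemma measure_ofReal_le_birthCount_le [IsProbabilityMeasure μ] (h : IsBirthDeathChain_s8 μ N p q)
    {lam : ℝ≥0∞} (hlam : 1 ≤ lam) (hlam_top : lam ≠ ∞) {F : ℕ → ℝ≥0∞} (hF1 : ∀ m, 1 ≤ F m)
    (hF : TiltedSuperharmonic p q lam F)
    {n : ℕ} (hN0 : ∀ ω, N 0 ω = n) {x : ℝ} (hx : 0 ≤ x) :
    μ {ω | ENNReal.ofReal x ≤ birthCount N ω} ≤ F n / lam ^ ⌊x⌋₊ := by
  set a := ⌊x⌋₊
  have ha : (a : ℝ≥0∞) ≤ ENNReal.ofReal x := by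
    rw [← ENNReal.ofReal_natCast]; exact ENNReal.ofReal_le_ofReal (Nat.floor_le hx)
  have hsub : {ω | ENNReal.ofReal x ≤ birthCount N ω} ⊆ ⋃ T, {ω | a ≤ birthsBefore (N · ω) T} :=
    fun ω hω => Set.mem_iUnion.2 <| exists_le_of_natCast_le_iSup <|
      birthCount_eq_iSup N ω ▸ ha.trans hω
  have hmono : Monotone fun T => {ω | a ≤ birthsBefore (N · ω) T} :=
    fun T T' hT ω hω => le_trans hω (birthsBefore_mono _ hT)
  refine (measure_mono hsub).trans ?_
  rw [hmono.measure_iUnion]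
  refine iSup_le fun T => ?_
  have hmeas : Measurable fun ω => lam ^ birthsBefore (N · ω) T * F (N T ω) :=
    (measurable_from_nat.comp (h.measurable_birthsBefore T)).mul
      (measurable_from_nat.comp (h.measurable T))
  calc μ {ω | a ≤ birthsBefore (N · ω) T}
      ≤ μ {ω | lam ^ a ≤ lam ^ birthsBefore (N · ω) T * F (N T ω)} :=
        measure_mono fun ω hω => le_mul_of_le_of_one_le (pow_le_pow_right₀ hlam hω) (hF1 _)
    _ ≤ (∫⁻ ω, lam ^ birthsBefore (N · ω) T * F (N T ω) ∂μ) / lam ^ a :=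
        meas_ge_le_lintegral_div hmeas.aemeasurable
          (pow_ne_zero _ (zero_lt_one.trans_le hlam).ne') (ENNReal.pow_ne_top hlam_top)
    _ ≤ F n / lam ^ a := by gcongr; exact h.lintegral_pow_birthsBefore_mul_le hF hN0 T

end IsBirthDeathChain_s8

end BirthDeathChain

theorem stmt_8_general (C D : ℝ) (hC : 0 < C) (hD : 0 < D) (k : ℝ) :
    ∃ Ck : ℝ, 0 < Ck ∧ ∃ n₀ : ℕ, ∀ n : ℕ, n₀ ≤ n →
      ∀ (Ω : Type) (_ : MeasurableSpace Ω) (μ : Measure Ω), IsProbabilityMeasure μ →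
      ∀ (N : ℕ → Ω → ℕ) (p q : ℕ → ℝ),
        (∀ t, Measurable (N t)) →
        (∀ m, 0 ≤ p m) → (∀ m, 0 ≤ q m) → (∀ m, p m + q m ≤ 1) →
        p 0 = 0 → q 0 = 0 →
        (∀ m : ℕ, 0 < m → p m ≤ C / m) →
        (∀ m : ℕ, 0 < m → D ≤ q m) →
        (∀ ω, N 0 ω = n) →
        -- birth transitions, conditionally on any past trajectory
        (∀ (t : ℕ) (path : ℕ → ℕ),
          μ {ω | ∀ s ≤ t, N s ω = path s} ≠ 0 →
          μ[|{ω | ∀ s ≤ t, N s ω = path s}] {ω | N (t + 1) ω = path t + 1}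
            = ENNReal.ofReal (p (path t))) →
        -- death transitions
        (∀ (t : ℕ) (path : ℕ → ℕ), 0 < path t →
          μ {ω | ∀ s ≤ t, N s ω = path s} ≠ 0 →
          μ[|{ω | ∀ s ≤ t, N s ω = path s}] {ω | N (t + 1) ω = path t - 1}
            = ENNReal.ofReal (q (path t))) →
        -- holding steps
        (∀ (t : ℕ) (path : ℕ → ℕ),
          μ {ω | ∀ s ≤ t, N s ω = path s} ≠ 0 →
          μ[|{ω | ∀ s ≤ t, N s ω = path s}] {ω | N (t + 1) ω = path t}
            = ENNReal.ofReal (1 - p (path t) - q (path t))) →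
        μ {ω | ENNReal.ofReal (Ck * (Real.log n) ^ 2) ≤ birthCount N ω} ≤
          ENNReal.ofReal (1 / (n : ℝ) ^ k) := by
  set r := min D 1 / 2 with hr_def
  have hr : 0 < r := by positivity
  have hr1 : r ≤ 1 := by linarith [min_le_right D 1]
  set m₁ := ⌈C / r⌉₊
  have hm₁ : C ≤ r * m₁ := by rw [← div_le_iff₀' hr]; exact Nat.le_ceil _
  set ε := r ^ (m₁ + 1) / (2 * (C + 1))
  have hε : 0 < ε := by positivity
  have hεC : ε * (2 * (C + 1)) ≤ r ^ (m₁ + 1) := (div_mul_cancel₀ _ (by positivity)).le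
  obtain ⟨n₀, hn₀⟩ := eventually_atTop.1
    (eventually_add_one_div_pow_floor_log_sq_le (by linarith : 1 < 1 + ε) k)
  refine ⟨1, one_pos, n₀, fun n hn Ω _ μ _ N p q hN hp hq hpq hp0 hq0 hpC hqD hN0 hb hd hh => ?_⟩
  have hchain : IsBirthDeathChain_s8 μ N p q := ⟨hN, hp, hq, hpq, hp0, hq0, hb, hd, hh⟩
  have hdrift := tiltedSuperharmonic_ofReal_lyapunov hr.le hr1 hε.le hεC hm₁ hp hq hpq hp0 hq0 hpC
    fun m hm => by linarith [min_le_left D 1, hqD m hm]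
  set a := ⌊Real.log n ^ 2⌋₊
  rw [one_mul]
  calc μ {ω | ENNReal.ofReal (Real.log n ^ 2) ≤ birthCount N ω}
      ≤ ENNReal.ofReal (lyapunov r m₁ n) / ENNReal.ofReal (1 + ε) ^ a :=
        hchain.measure_ofReal_le_birthCount_le (ENNReal.one_le_ofReal.2 (by linarith))
          ENNReal.ofReal_ne_top (fun m => ENNReal.one_le_ofReal.2 (one_le_lyapunov hr.le m))
          hdrift hN0 (by positivity)
    _ = ENNReal.ofReal (lyapunov r m₁ n / (1 + ε) ^ a) := by
        rw [← ENNReal.ofReal_pow (by positivity), ENNReal.ofReal_div_of_pos (by positivity)]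
    _ ≤ ENNReal.ofReal (1 / (n : ℝ) ^ k) := by
        refine ENNReal.ofReal_le_ofReal (le_trans ?_ (hn₀ n hn))
        gcongr
        exact lyapunov_le hr.le hr1 n

/-- High-probability bound on the number of births of a nice birth-death chain:
for every `k > 0` there is a constant `C(k)` such that, for all sufficiently
large `n`, `Pr[B(n) ≥ C(k)·(log n)²] ≤ 1/n^k`. -/
theorem stmt_8 (C D : ℝ) (hC : 0 < C) (hD : 0 < D) (k : ℝ) (hk : 0 < k) :
    ∃ Ck : ℝ, 0 < Ck ∧ ∃ n₀ : ℕ, ∀ n : ℕ, n₀ ≤ n →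
      ∀ (Ω : Type) (_ : MeasurableSpace Ω) (μ : Measure Ω), IsProbabilityMeasure μ →
      ∀ (N : ℕ → Ω → ℕ) (p q : ℕ → ℝ),
        (∀ t, Measurable (N t)) →
        (∀ m, 0 ≤ p m) → (∀ m, 0 ≤ q m) → (∀ m, p m + q m ≤ 1) →
        p 0 = 0 → q 0 = 0 →
        (∀ m : ℕ, 0 < m → p m ≤ C / m) →
        (∀ m : ℕ, 0 < m → D ≤ q m) →
        (∀ ω, N 0 ω = n) →
        -- birth transitions, conditionally on any past trajectory
        (∀ (t : ℕ) (path : ℕ → ℕ),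
          μ {ω | ∀ s ≤ t, N s ω = path s} ≠ 0 →
          μ[|{ω | ∀ s ≤ t, N s ω = path s}] {ω | N (t + 1) ω = path t + 1}
            = ENNReal.ofReal (p (path t))) →
        -- death transitions
        (∀ (t : ℕ) (path : ℕ → ℕ), 0 < path t →
          μ {ω | ∀ s ≤ t, N s ω = path s} ≠ 0 →
          μ[|{ω | ∀ s ≤ t, N s ω = path s}] {ω | N (t + 1) ω = path t - 1}
            = ENNReal.ofReal (q (path t))) →
        -- holding steps
        (∀ (t : ℕ) (path : ℕ → ℕ),
          μ {ω | ∀ s ≤ t, N s ω = path s} ≠ 0 →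
          μ[|{ω | ∀ s ≤ t, N s ω = path s}] {ω | N (t + 1) ω = path t}
            = ENNReal.ofReal (1 - p (path t) - q (path t))) →
        μ {ω | ENNReal.ofReal (Ck * (Real.log n) ^ 2) ≤ birthCount N ω} ≤
          ENNReal.ofReal (1 / (n : ℝ) ^ k) :=
  stmt_8_general C D hC hD k
end

section
/- In the pseudo-coupling (Ŝ, N̂) of a two-species chain and a dominating single-species birth-death chain, if min Ŝ_0 = N̂_0, then almost surely for all t ≥ 0: min Ŝ_t ≤ N̂_t, and the number J_t(Ŝ) of bad non-competitive events in Ŝ up to time t is at most the number B_t(N̂) of births in N̂ up to time t. -/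
/-!
While `min Ŝ = N̂` the two chains read the same uniform `ξ`: by (D1) every bad event of `Ŝ`
is a birth of `N̂`, and by (D2) every death of `N̂` is a good event of `Ŝ`, so the gap
`N̂ - min Ŝ` cannot become negative. While `min Ŝ < N̂`, `Ŝ` is frozen and `N̂` moves down by at
most one, so the gap stays nonnegative as well. Bad events of `Ŝ` only happen in the coupled
state, where they are births of `N̂`, which gives the comparison of the counts.
-/

namespace BirthDeathChain

variable {p q ξ : ℕ → ℝ} {N : ℕ → ℕ}

theorem le_succ_of_lt_one_sub_death
    (hup : ∀ t, ξ t < p (N t) → N (t + 1) = N t + 1)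
    (hhold : ∀ t, p (N t) ≤ ξ t → ξ t < 1 - q (N t) → N (t + 1) = N t)
    {t : ℕ} (ht : ξ t < 1 - q (N t)) : N t ≤ N (t + 1) := by
  rcases lt_or_ge (ξ t) (p (N t)) with hbirth | hno
  · rw [hup t hbirth]; omega
  · rw [hhold t hno ht]

theorem sub_one_le_succ
    (hup : ∀ t, ξ t < p (N t) → N (t + 1) = N t + 1)
    (hdown : ∀ t, 1 - q (N t) ≤ ξ t → N (t + 1) = N t - 1)
    (hhold : ∀ t, p (N t) ≤ ξ t → ξ t < 1 - q (N t) → N (t + 1) = N t)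
    (t : ℕ) : N t - 1 ≤ N (t + 1) := by
  rcases lt_or_ge (ξ t) (1 - q (N t)) with hno | hdeath
  · exact (Nat.sub_le _ _).trans (le_succ_of_lt_one_sub_death hup hhold hno)
  · rw [hdown t hdeath]

end BirthDeathChain

namespace PseudoCoupling

open BirthDeathChain

variable {P Q : ℕ × ℕ → ℝ} {p q ξ : ℕ → ℝ} {S : ℕ → ℕ × ℕ} {N : ℕ → ℕ}

theorem lt_birth_of_bad (hD1 : ∀ ab : ℕ × ℕ, P ab ≤ p (min ab.1 ab.2))
    {t : ℕ} (hc : min (S t).1 (S t).2 = N t) (hbad : ξ t < P (S t)) : ξ t < p (N t) :=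
  hc ▸ hbad.trans_le (hD1 (S t))

theorem lt_one_sub_death_of_not_good (hD2 : ∀ ab : ℕ × ℕ, q (min ab.1 ab.2) ≤ Q ab)
    {t : ℕ} (hc : min (S t).1 (S t).2 = N t) (hng : ξ t < 1 - Q (S t)) :
    ξ t < 1 - q (N t) := by
  have := hD2 (S t)
  rw [hc] at this
  linarith

theorem min_succ_le_succ_of_coupled
    (hD1 : ∀ ab : ℕ × ℕ, P ab ≤ p (min ab.1 ab.2))
    (hD2 : ∀ ab : ℕ × ℕ, q (min ab.1 ab.2) ≤ Q ab)
    (hNup : ∀ t, ξ t < p (N t) → N (t + 1) = N t + 1)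
    (hNdown : ∀ t, 1 - q (N t) ≤ ξ t → N (t + 1) = N t - 1)
    (hNhold : ∀ t, p (N t) ≤ ξ t → ξ t < 1 - q (N t) → N (t + 1) = N t)
    (hSbad : ∀ t, min (S t).1 (S t).2 = N t → ξ t < P (S t) →
      min (S (t + 1)).1 (S (t + 1)).2 ≤ min (S t).1 (S t).2 + 1)
    (hSgood : ∀ t, min (S t).1 (S t).2 = N t → 1 - Q (S t) ≤ ξ t →
      min (S (t + 1)).1 (S (t + 1)).2 = min (S t).1 (S t).2 - 1)
    (hSneutral : ∀ t, min (S t).1 (S t).2 = N t →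
      P (S t) ≤ ξ t → ξ t < 1 - Q (S t) →
      min (S (t + 1)).1 (S (t + 1)).2 ≤ min (S t).1 (S t).2)
    {t : ℕ} (hc : min (S t).1 (S t).2 = N t) :
    min (S (t + 1)).1 (S (t + 1)).2 ≤ N (t + 1) := by
  rcases lt_or_ge (ξ t) (P (S t)) with hbad | hnb
  · have hS := hSbad t hc hbad
    rw [hNup t (lt_birth_of_bad hD1 hc hbad)]
    omega
  rcases lt_or_ge (ξ t) (1 - Q (S t)) with hneutral | hgood
  · have hS := hSneutral t hc hnb hneutral
    have hN := le_succ_of_lt_one_sub_death hNup hNhold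
      (lt_one_sub_death_of_not_good hD2 hc hneutral)
    omega
  · have hS := hSgood t hc hgood
    have hN := sub_one_le_succ hNup hNdown hNhold t
    omega

theorem min_succ_le_succ_of_frozen
    (hNup : ∀ t, ξ t < p (N t) → N (t + 1) = N t + 1)
    (hNdown : ∀ t, 1 - q (N t) ≤ ξ t → N (t + 1) = N t - 1)
    (hNhold : ∀ t, p (N t) ≤ ξ t → ξ t < 1 - q (N t) → N (t + 1) = N t)
    (hSfreeze : ∀ t, min (S t).1 (S t).2 ≠ N t → S (t + 1) = S t)
    {t : ℕ} (hlt : min (S t).1 (S t).2 < N t) :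
    min (S (t + 1)).1 (S (t + 1)).2 ≤ N (t + 1) := by
  have hN := sub_one_le_succ hNup hNdown hNhold t
  rw [hSfreeze t hlt.ne]
  omega

end PseudoCoupling

theorem stmt_10_general
    (P Q : ℕ × ℕ → ℝ) (p q : ℕ → ℝ)
    -- domination conditions (D1) and (D2)
    (hD1 : ∀ ab : ℕ × ℕ, P ab ≤ p (min ab.1 ab.2))
    (hD2 : ∀ ab : ℕ × ℕ, q (min ab.1 ab.2) ≤ Q ab)
    -- the driving i.i.d. uniform [0,1) sequence (a fixed realization)
    (ξ : ℕ → ℝ)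
    (Shat : ℕ → ℕ × ℕ) (Nhat : ℕ → ℕ)
    -- update rules of the single-species chain N̂
    (hNup : ∀ t, ξ t < p (Nhat t) → Nhat (t + 1) = Nhat t + 1)
    (hNdown : ∀ t, 1 - q (Nhat t) ≤ ξ t → Nhat (t + 1) = Nhat t - 1)
    (hNhold : ∀ t, p (Nhat t) ≤ ξ t → ξ t < 1 - q (Nhat t) → Nhat (t + 1) = Nhat t)
    -- update rules of the two-species chain Ŝ
    (hSfreeze : ∀ t, min (Shat t).1 (Shat t).2 ≠ Nhat t → Shat (t + 1) = Shat t)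
    (hSbad : ∀ t, min (Shat t).1 (Shat t).2 = Nhat t → ξ t < P (Shat t) →
      min (Shat (t + 1)).1 (Shat (t + 1)).2 ≤ min (Shat t).1 (Shat t).2 + 1)
    (hSgood : ∀ t, min (Shat t).1 (Shat t).2 = Nhat t → 1 - Q (Shat t) ≤ ξ t →
      min (Shat (t + 1)).1 (Shat (t + 1)).2 = min (Shat t).1 (Shat t).2 - 1)
    (hSneutral : ∀ t, min (Shat t).1 (Shat t).2 = Nhat t →
      P (Shat t) ≤ ξ t → ξ t < 1 - Q (Shat t) →
      min (Shat (t + 1)).1 (Shat (t + 1)).2 ≤ min (Shat t).1 (Shat t).2)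
    (h0 : min (Shat 0).1 (Shat 0).2 = Nhat 0) :
    ∀ t : ℕ,
      min (Shat t).1 (Shat t).2 ≤ Nhat t ∧
      ((Finset.range t).filter fun s =>
          min (Shat s).1 (Shat s).2 = Nhat s ∧ ξ s < P (Shat s)).card ≤
        ((Finset.range t).filter fun s => ξ s < p (Nhat s)).card := by
  have hinv : ∀ t, min (Shat t).1 (Shat t).2 ≤ Nhat t := by
    intro t
    induction t with
    | zero => exact h0.le
    | succ t ih =>
      rcases ih.eq_or_lt with hc | hlt
      · exact PseudoCoupling.min_succ_le_succ_of_coupled hD1 hD2 hNup hNdown hNhold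
          hSbad hSgood hSneutral hc
      · exact PseudoCoupling.min_succ_le_succ_of_frozen hNup hNdown hNhold hSfreeze hlt
  refine fun t => ⟨hinv t, Finset.card_le_card (Finset.monotone_filter_right _ ?_)⟩
  exact fun s _ hs => PseudoCoupling.lt_birth_of_bad hD1 hs.1 hs.2

/-- Pseudo-coupling invariant: in the joint chain `(Ŝ, N̂)` driven by a common
sequence `ξ` of uniform `[0,1)` variables, where `N̂` is a dominating birth-death
chain (`P(a,b) ≤ p(min{a,b})`, `Q(a,b) ≥ q(min{a,b})`) and `Ŝ` freezes whenever
`min Ŝ_t ≠ N̂_t`, if `min Ŝ_0 = N̂_0` then almost surely (here: for every driving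
sequence, i.e. pathwise) `min Ŝ_t ≤ N̂_t` for all `t`, and the number of bad
non-competitive events of `Ŝ` up to time `t` is at most the number of births of
`N̂` up to time `t`. -/
theorem stmt_10
    (P Q : ℕ × ℕ → ℝ) (p q : ℕ → ℝ)
    (hPnn : ∀ ab, 0 ≤ P ab) (hQnn : ∀ ab, 0 ≤ Q ab) (hPQ : ∀ ab, P ab + Q ab ≤ 1)
    (hpnn : ∀ m, 0 ≤ p m) (hqnn : ∀ m, 0 ≤ q m) (hpq : ∀ m, p m + q m ≤ 1)
    -- domination conditions (D1) and (D2)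
    (hD1 : ∀ ab : ℕ × ℕ, P ab ≤ p (min ab.1 ab.2))
    (hD2 : ∀ ab : ℕ × ℕ, q (min ab.1 ab.2) ≤ Q ab)
    -- the driving i.i.d. uniform [0,1) sequence (a fixed realization)
    (ξ : ℕ → ℝ) (hξ : ∀ t, 0 ≤ ξ t ∧ ξ t < 1)
    (Shat : ℕ → ℕ × ℕ) (Nhat : ℕ → ℕ)
    -- update rules of the single-species chain N̂
    (hNup : ∀ t, ξ t < p (Nhat t) → Nhat (t + 1) = Nhat t + 1)
    (hNdown : ∀ t, 1 - q (Nhat t) ≤ ξ t → Nhat (t + 1) = Nhat t - 1)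
    (hNhold : ∀ t, p (Nhat t) ≤ ξ t → ξ t < 1 - q (Nhat t) → Nhat (t + 1) = Nhat t)
    -- update rules of the two-species chain Ŝ
    (hSfreeze : ∀ t, min (Shat t).1 (Shat t).2 ≠ Nhat t → Shat (t + 1) = Shat t)
    (hSbad : ∀ t, min (Shat t).1 (Shat t).2 = Nhat t → ξ t < P (Shat t) →
      min (Shat (t + 1)).1 (Shat (t + 1)).2 ≤ min (Shat t).1 (Shat t).2 + 1)
    (hSgood : ∀ t, min (Shat t).1 (Shat t).2 = Nhat t → 1 - Q (Shat t) ≤ ξ t →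
      min (Shat (t + 1)).1 (Shat (t + 1)).2 = min (Shat t).1 (Shat t).2 - 1)
    (hSneutral : ∀ t, min (Shat t).1 (Shat t).2 = Nhat t →
      P (Shat t) ≤ ξ t → ξ t < 1 - Q (Shat t) →
      min (Shat (t + 1)).1 (Shat (t + 1)).2 ≤ min (Shat t).1 (Shat t).2)
    (h0 : min (Shat 0).1 (Shat 0).2 = Nhat 0) :
    ∀ t : ℕ,
      min (Shat t).1 (Shat t).2 ≤ Nhat t ∧
      ((Finset.range t).filter fun s =>
          min (Shat s).1 (Shat s).2 = Nhat s ∧ ξ s < P (Shat s)).card ≤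
        ((Finset.range t).filter fun s => ξ s < p (Nhat s)).card :=
  stmt_10_general P Q p q hD1 hD2 ξ Shat Nhat hNup hNdown hNhold hSfreeze hSbad hSgood hSneutral h0
end

section
/- Consider a two-species Lotka–Volterra jump chain with rates ϑ = β + δ > 0, interspecific competition rate α > 0, and no intraspecific competition, started with minority count m. There exist constants f, g > 0 such that the number I(S) of individual (non-competitive) events before consensus satisfies Pr[I(S) ≥ f·log m] ≥ 1 − 1/m^g. -/
/-!
When the minority count first reaches a level `k ≥ 1`, the state `(a, b)` has `min a b = k`,
so whatever happened before, the next event is individual with probability at least `c / k`,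
where `c = ϑ / (α + ϑ)`. Give the trajectory the weight `2⁻¹` for every level `k ≤ m` at which
this happens. Conditioning successively on the path up to the first hitting times of
`m, m - 1, …, 1` bounds the expected weight by `∏ₖ (1 - c / (2k)) ≤ m ^ (-c / 2)`.
The weight is `2 ^ (-N)`, where `N ≤ I(S)` counts those levels, so Markov's inequality gives
`Pr[I(S) < (c / (4 log 2)) log m] ≤ m ^ (-c / 4)`.
-/

open MeasureTheory ProbabilityTheory
open scoped ENNReal

open Classical in
/-- Number of individual (non-competitive) events, i.e. transitions satisfying the
predicate `NonComp`, occurring before consensus is reached. -/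
noncomputable def indivCount {Ω : Type*} (NonComp : ℕ × ℕ → ℕ × ℕ → Prop)
    (S : ℕ → Ω → ℕ × ℕ) (ω : Ω) : ℝ≥0∞ :=
  ∑' t : ℕ,
    if (∀ s ≤ t, 0 < min (S s ω).1 (S s ω).2) ∧ NonComp (S t ω) (S (t + 1) ω)
    then 1 else 0

namespace LotkaVolterra

open Finset

section MeasureLemmas

variable {Ω : Type*} [MeasurableSpace Ω] {μ : Measure Ω}

theorem lintegral_le_mul_of_forall_setLIntegral_le {ι : Type*} [Countable ι] {C : ι → Set Ω}
    (hC : ∀ i, MeasurableSet (C i)) (hdisj : Pairwise (Function.onFun Disjoint C))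
    (hcover : ∀ᵐ ω ∂μ, ω ∈ ⋃ i, C i) {F G : Ω → ℝ≥0∞} {q : ℝ≥0∞}
    (h : ∀ i, ∫⁻ ω in C i, F ω ∂μ ≤ q * ∫⁻ ω in C i, G ω ∂μ) :
    ∫⁻ ω, F ω ∂μ ≤ q * ∫⁻ ω, G ω ∂μ := by
  have hrestrict : μ.restrict (⋃ i, C i) = μ := Measure.restrict_eq_self_of_ae_mem hcover
  calc ∫⁻ ω, F ω ∂μ = ∑' i, ∫⁻ ω in C i, F ω ∂μ := by
        rw [← lintegral_iUnion hC hdisj, hrestrict]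
    _ ≤ ∑' i, q * ∫⁻ ω in C i, G ω ∂μ := ENNReal.tsum_le_tsum h
    _ = q * ∫⁻ ω, G ω ∂μ := by
        rw [ENNReal.tsum_mul_left, ← lintegral_iUnion hC hdisj, hrestrict]

open Classical in
theorem setLIntegral_ite_inv_two {C A : Set Ω} (hA : MeasurableSet A) (hC : μ C ≠ ∞) :
    ∫⁻ ω in C, (if ω ∈ A then 2⁻¹ else 1) ∂μ = μ C - 2⁻¹ * μ (C ∩ A) := by
  have hw : (fun ω => if ω ∈ A then (2⁻¹ : ℝ≥0∞) else 1) =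
      fun ω => 1 - A.indicator (fun _ => 2⁻¹) ω := by
    ext ω
    by_cases hω : ω ∈ A <;> simp [hω, ENNReal.one_sub_inv_two]
  have hfin : ∫⁻ ω in C, A.indicator (fun _ => (2⁻¹ : ℝ≥0∞)) ω ∂μ ≠ ∞ := by
    rw [lintegral_indicator_const hA, Measure.restrict_apply hA]
    exact ENNReal.mul_ne_top (by simp)
      (ne_top_of_le_ne_top hC (measure_mono Set.inter_subset_right))
  have hle : ∀ ω, A.indicator (fun _ => (2⁻¹ : ℝ≥0∞)) ω ≤ 1 :=
    Set.indicator_le fun _ _ => ENNReal.inv_le_one.2 one_le_two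
  rw [hw, lintegral_sub (measurable_const.indicator hA) hfin (.of_forall hle),
    lintegral_indicator_const hA, Measure.restrict_apply hA, setLIntegral_const, one_mul,
    Set.inter_comm]

open Classical in
theorem setLIntegral_ite_inv_two_le {C A : Set Ω} (hA : MeasurableSet A) (hC : μ C ≠ ∞)
    {r : ℝ} (hr : 0 ≤ r) (hCA : ENNReal.ofReal r * μ C ≤ μ (C ∩ A)) :
    ∫⁻ ω in C, (if ω ∈ A then 2⁻¹ else 1) ∂μ ≤ ENNReal.ofReal (1 - r / 2) * μ C := by
  calc ∫⁻ ω in C, (if ω ∈ A then 2⁻¹ else 1) ∂μ = μ C - 2⁻¹ * μ (C ∩ A) :=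
        setLIntegral_ite_inv_two hA hC
    _ ≤ μ C - 2⁻¹ * (ENNReal.ofReal r * μ C) := by gcongr
    _ = ENNReal.ofReal (1 - r / 2) * μ C := by
        rw [ENNReal.ofReal_sub _ (by positivity), ENNReal.ofReal_one,
          ENNReal.sub_mul (fun _ _ => hC), one_mul, ENNReal.ofReal_div_of_pos two_pos,
          ENNReal.ofReal_ofNat, ENNReal.div_eq_inv_mul, mul_assoc]

theorem one_sub_le_measure_of_measure_compl_le [IsProbabilityMeasure μ] {s : Set Ω} {x : ℝ≥0∞}
    (h : μ sᶜ ≤ x) : 1 - x ≤ μ s := by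
  rw [tsub_le_iff_right, ← measure_univ (μ := μ), ← Set.union_compl_self s]
  exact (measure_union_le s sᶜ).trans (by gcongr)

end MeasureLemmas

theorem log_le_sum_Ioc_inv {m : ℕ} (hm : m ≠ 0) : Real.log m ≤ ∑ j ∈ Ioc 0 m, (j : ℝ)⁻¹ := by
  calc Real.log m ≤ Real.log ↑(m + 1) :=
        Real.log_le_log (by positivity) (by push_cast; linarith)
    _ ≤ harmonic m := log_add_one_le_harmonic m
    _ = ∑ j ∈ Ioc 0 m, (j : ℝ)⁻¹ := by
        rw [harmonic_eq_sum_Icc, ← Icc_add_one_left_eq_Ioc]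
        push_cast
        rfl

theorem prod_ofReal_one_sub_div_le_rpow {c : ℝ} (hc0 : 0 ≤ c) (hc1 : c ≤ 1) {m : ℕ}
    (hm : m ≠ 0) :
    ∏ j ∈ Ioc 0 m, ENNReal.ofReal (1 - c / j) ≤ ENNReal.ofReal ((m : ℝ) ^ (-c)) := by
  have hnonneg : ∀ j ∈ Ioc 0 m, 0 ≤ 1 - c / j := fun j hj => by
    have : (1 : ℝ) ≤ j := by exact_mod_cast (mem_Ioc.1 hj).1
    rw [sub_nonneg, div_le_one (by positivity)]
    linarith
  rw [← ENNReal.ofReal_prod_of_nonneg hnonneg]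
  apply ENNReal.ofReal_le_ofReal
  calc ∏ j ∈ Ioc 0 m, (1 - c / j) ≤ ∏ j ∈ Ioc 0 m, Real.exp (-(c / j)) :=
        prod_le_prod hnonneg fun j _ => by linarith [Real.add_one_le_exp (-(c / j))]
    _ = Real.exp (-(c * ∑ j ∈ Ioc 0 m, (j : ℝ)⁻¹)) := by
        rw [← Real.exp_sum, mul_sum, ← sum_neg_distrib]
        simp only [div_eq_mul_inv]
    _ ≤ Real.exp (-(c * Real.log m)) := by
        gcongr
        exact log_le_sum_Ioc_inv hm
    _ = (m : ℝ) ^ (-c) := by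
        rw [Real.rpow_def_of_pos (by positivity), mul_neg, mul_comm]

theorem ofReal_two_rpow_neg_le_inv_two_pow {n : ℕ} {x : ℝ} (h : (n : ℝ) ≤ x) :
    ENNReal.ofReal ((2 : ℝ) ^ (-x)) ≤ 2⁻¹ ^ n := by
  calc ENNReal.ofReal ((2 : ℝ) ^ (-x)) ≤ ENNReal.ofReal ((2 : ℝ) ^ (-(n : ℝ))) := by
        gcongr
        exact one_le_two
    _ = 2⁻¹ ^ n := by
        rw [Real.rpow_neg zero_le_two, Real.rpow_natCast, ENNReal.ofReal_inv_of_pos (by positivity),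
          ENNReal.ofReal_pow zero_le_two, ENNReal.ofReal_ofNat, ENNReal.inv_pow]

noncomputable def indivProb (ϑ α : ℝ) (x : ℕ × ℕ) : ℝ :=
  ϑ * (x.1 + x.2) / (α * x.1 * x.2 + ϑ * (x.1 + x.2))

theorem div_min_le_indivProb {ϑ α : ℝ} (hϑ : 0 < ϑ) (hα : 0 < α) {x : ℕ × ℕ}
    (hx : 0 < min x.1 x.2) : ϑ / (α + ϑ) / (min x.1 x.2 : ℕ) ≤ indivProb ϑ α x := by
  obtain ⟨a, b⟩ := x
  have hk : (1 : ℝ) ≤ (min a b : ℕ) := by exact_mod_cast hx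
  have hab : (a : ℝ) * b ≤ (min a b : ℕ) * (a + b) := by
    rcases le_total a b with h | h
    · rw [min_eq_left h]; nlinarith [(Nat.cast_nonneg a : (0 : ℝ) ≤ a)]
    · rw [min_eq_right h]; nlinarith [(Nat.cast_nonneg b : (0 : ℝ) ≤ b)]
  have ha : (1 : ℝ) ≤ a := by exact_mod_cast (le_min_iff.1 hx).1
  have hb : (1 : ℝ) ≤ b := by exact_mod_cast (le_min_iff.1 hx).2
  unfold indivProb
  rw [div_div, div_le_div_iff₀ (by positivity) (by positivity)]
  nlinarith [mul_le_mul_of_nonneg_left hab (by positivity : (0 : ℝ) ≤ ϑ * α),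
    mul_le_mul_of_nonneg_left hk (by positivity : (0 : ℝ) ≤ ϑ * ϑ * (a + b))]

section HittingTimes

variable {Ω : Type*} {S : ℕ → Ω → ℕ × ℕ} {NC : ℕ × ℕ → ℕ × ℕ → Prop}
  {j k t t' : ℕ} {ω ω' : Ω}

abbrev minCount (S : ℕ → Ω → ℕ × ℕ) (t : ℕ) (ω : Ω) : ℕ := min (S t ω).1 (S t ω).2

def IsFirstHit (S : ℕ → Ω → ℕ × ℕ) (k t : ℕ) (ω : Ω) : Prop :=
  minCount S t ω = k ∧ ∀ s < t, k < minCount S s ω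

def cylinder (S : ℕ → Ω → ℕ × ℕ) (t : ℕ) (ω₀ : Ω) : Set Ω :=
  {ω | ∀ s ≤ t, S s ω = S s ω₀}

def IndivAtHit (S : ℕ → Ω → ℕ × ℕ) (NC : ℕ × ℕ → ℕ × ℕ → Prop) (k : ℕ) (ω : Ω) : Prop :=
  ∃ t, IsFirstHit S k t ω ∧ NC (S t ω) (S (t + 1) ω)

open Classical in
noncomputable def hitWeight (S : ℕ → Ω → ℕ × ℕ) (NC : ℕ × ℕ → ℕ × ℕ → Prop) (k : ℕ) (ω : Ω) :
    ℝ≥0∞ :=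
  if IndivAtHit S NC k ω then 2⁻¹ else 1

theorem IsFirstHit.lt_of_lt (hk : IsFirstHit S k t ω) (hj : IsFirstHit S j t' ω) (hkj : k < j) :
    t' < t := by
  by_contra! h
  rcases h.lt_or_eq with h | rfl
  · have := hj.2 t h; have := hk.1; omega
  · have := hk.1.symm.trans hj.1; omega

theorem IsFirstHit.unique (h : IsFirstHit S k t ω) (h' : IsFirstHit S k t' ω) : t = t' := by
  by_contra hne
  rcases Nat.lt_or_gt_of_ne hne with hlt | hlt
  · have := h'.2 t hlt; have := h.1; omega
  · have := h.2 t' hlt; have := h'.1; omega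

theorem IsFirstHit.congr (h : IsFirstHit S k t ω) (heq : ∀ s ≤ t, S s ω' = S s ω) :
    IsFirstHit S k t ω' := by
  refine ⟨?_, fun s hs => ?_⟩
  · rw [minCount, heq t le_rfl]; exact h.1
  · rw [minCount, heq s hs.le]; exact h.2 s hs

theorem IsFirstHit.pos (h : IsFirstHit S k t ω) (hk : 0 < k) {s : ℕ} (hs : s ≤ t) :
    0 < minCount S s ω := by
  rcases hs.lt_or_eq with hs | rfl
  · exact hk.trans (h.2 s hs)
  · exact h.1 ▸ hk

theorem exists_isFirstHit (hk : k ≤ minCount S 0 ω)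
    (hdec : ∀ t, minCount S t ω ≤ minCount S (t + 1) ω + 1) (hcons : ∃ t, minCount S t ω = 0) :
    ∃ t, IsFirstHit S k t ω := by
  have hex : ∃ t, minCount S t ω ≤ k := hcons.imp fun _ h => by omega
  refine ⟨Nat.find hex, (Nat.find_spec hex).antisymm ?_, fun s hs => not_le.1 (Nat.find_min hex hs)⟩
  rcases hfind : Nat.find hex with _ | t
  · exact hk
  · have := Nat.find_min hex (m := t) (by omega)
    have := hdec t
    omega

theorem indivAtHit_iff (h : IsFirstHit S k t ω) :
    IndivAtHit S NC k ω ↔ NC (S t ω) (S (t + 1) ω) :=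
  ⟨fun ⟨_, ht', hnc⟩ => h.unique ht' ▸ hnc, fun hnc => ⟨t, h, hnc⟩⟩

theorem IndivAtHit.congr (hj : IndivAtHit S NC j ω) (h : IsFirstHit S k t ω)
    (heq : ∀ s ≤ t, S s ω' = S s ω) (hkj : k < j) : IndivAtHit S NC j ω' := by
  obtain ⟨s, hs, hnc⟩ := hj
  have hst : s < t := h.lt_of_lt hs hkj
  refine ⟨s, hs.congr fun u hu => heq u (by omega), ?_⟩
  rwa [heq s hst.le, heq (s + 1) hst]

theorem indivAtHit_congr (h : IsFirstHit S k t ω) (heq : ∀ s ≤ t, S s ω' = S s ω)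
    (hkj : k < j) : IndivAtHit S NC j ω' ↔ IndivAtHit S NC j ω :=
  ⟨fun hj => hj.congr (h.congr heq) (fun s hs => (heq s hs).symm) hkj,
    fun hj => hj.congr h heq hkj⟩

theorem hitWeight_congr (h : IsFirstHit S k t ω) (heq : ∀ s ≤ t, S s ω' = S s ω) (hkj : k < j) :
    hitWeight S NC j ω' = hitWeight S NC j ω := by
  unfold hitWeight
  rw [indivAtHit_congr (NC := NC) h heq hkj]

open Classical in
theorem prod_hitWeight_eq_pow (s : Finset ℕ) (ω : Ω) :
    ∏ j ∈ s, hitWeight S NC j ω = 2⁻¹ ^ #{j ∈ s | IndivAtHit S NC j ω} := by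
  simp [hitWeight, prod_ite]

open Classical in
theorem card_indivAtHit_le_indivCount {s : Finset ℕ} (hs : ∀ j ∈ s, 0 < j) (ω : Ω) :
    (#{j ∈ s | IndivAtHit S NC j ω} : ℝ≥0∞) ≤ indivCount NC S ω := by
  set F := {j ∈ s | IndivAtHit S NC j ω}
  have hF : ∀ j ∈ F, ∃ t, IsFirstHit S j t ω ∧ NC (S t ω) (S (t + 1) ω) :=
    fun j hj => (mem_filter.1 hj).2
  choose! τ hτ using hF
  have hinj : Set.InjOn τ F := fun j hj j' hj' h =>
    (hτ j hj).1.1.symm.trans (h ▸ (hτ j' hj').1.1)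
  calc (#F : ℝ≥0∞) = ∑ t ∈ F.image τ, 1 := by
        rw [sum_const, card_image_of_injOn hinj, nsmul_one]
    _ ≤ indivCount NC S ω := by
        refine le_trans (le_of_eq (sum_congr rfl fun t ht => ?_)) (ENNReal.sum_le_tsum _)
        obtain ⟨j, hj, rfl⟩ := mem_image.1 ht
        have hj0 : 0 < j := hs j (mem_filter.1 hj).1
        exact (if_pos ⟨fun u hu => (hτ j hj).1.pos hj0 hu, (hτ j hj).2⟩).symm

end HittingTimes

section Measurability

variable {Ω : Type*} [MeasurableSpace Ω] {S : ℕ → Ω → ℕ × ℕ} {NC : ℕ × ℕ → ℕ × ℕ → Prop}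

theorem measurable_minCount (hS : ∀ t, Measurable (S t)) (t : ℕ) : Measurable (minCount S t) :=
  (measurable_of_countable fun x : ℕ × ℕ => min x.1 x.2).comp (hS t)

theorem measurable_isFirstHit (hS : ∀ t, Measurable (S t)) (k t : ℕ) :
    Measurable (IsFirstHit S k t) :=
  ((measurable_minCount hS t).eq_const k).and <| .forall fun s =>
    measurable_const.imp ((measurable_of_countable _).comp (measurable_minCount hS s))

theorem measurableSet_cylinder (hS : ∀ t, Measurable (S t)) (t : ℕ) (ω₀ : Ω) :
    MeasurableSet (cylinder S t ω₀) :=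
  (Measurable.forall fun s => measurable_const.imp ((hS s).eq_const _)).setOf

theorem measurable_indivAtHit (hS : ∀ t, Measurable (S t)) (k : ℕ) :
    Measurable (IndivAtHit S NC k) :=
  .exists fun t => (measurable_isFirstHit hS k t).and <|
    (measurable_of_countable (Function.uncurry NC)).comp ((hS t).prodMk (hS (t + 1)))

theorem measurable_hitWeight (hS : ∀ t, Measurable (S t)) (k : ℕ) :
    Measurable (hitWeight S NC k) :=
  Measurable.ite (measurable_indivAtHit hS k).setOf measurable_const measurable_const

end Measurability

section Conditioning

variable {Ω : Type*} [MeasurableSpace Ω]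

def HasIndivEventProb (μ : Measure Ω) (S : ℕ → Ω → ℕ × ℕ) (NC : ℕ × ℕ → ℕ × ℕ → Prop)
    (ϑ α : ℝ) : Prop :=
  ∀ (t : ℕ) (path : ℕ → ℕ × ℕ), 0 < min (path t).1 (path t).2 →
    μ {ω | ∀ s ≤ t, S s ω = path s} ≠ 0 →
    μ[|{ω | ∀ s ≤ t, S s ω = path s}] {ω | NC (path t) (S (t + 1) ω)} =
      ENNReal.ofReal (indivProb ϑ α (path t))

variable {μ : Measure Ω} {S : ℕ → Ω → ℕ × ℕ} {NC : ℕ × ℕ → ℕ × ℕ → Prop} {ϑ α : ℝ}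

theorem setLIntegral_cylinder_hitWeight_mul_le [IsFiniteMeasure μ] (hϑ : 0 < ϑ) (hα : 0 < α)
    (hS : ∀ t, Measurable (S t)) (hP : HasIndivEventProb μ S NC ϑ α) {k t : ℕ} {ω₀ : Ω}
    (hk : 0 < k) (h₀ : IsFirstHit S k t ω₀) {G : Ω → ℝ≥0∞}
    (hG : ∀ ω ∈ cylinder S t ω₀, G ω = G ω₀) :
    ∫⁻ ω in cylinder S t ω₀, hitWeight S NC k ω * G ω ∂μ ≤
      ENNReal.ofReal (1 - ϑ / (α + ϑ) / k / 2) * ∫⁻ ω in cylinder S t ω₀, G ω ∂μ := by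
  classical
  set C := cylinder S t ω₀
  set A := {ω | NC (S t ω₀) (S (t + 1) ω)}
  have hC : MeasurableSet C := measurableSet_cylinder hS t ω₀
  have hA : MeasurableSet A := ((measurable_of_countable _).comp (hS (t + 1))).setOf
  have hpos : 0 < minCount S t ω₀ := h₀.1 ▸ hk
  have hCA : ENNReal.ofReal (ϑ / (α + ϑ) / k) * μ C ≤ μ (C ∩ A) := by
    rcases eq_or_ne (μ C) 0 with h0 | h0
    · simp [h0]
    have hcond : μ[A | C] = ENNReal.ofReal (indivProb ϑ α (S t ω₀)) :=
      hP t (fun s => S s ω₀) hpos h0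
    rw [← cond_mul_eq_inter hC A μ, hcond]
    gcongr
    exact h₀.1 ▸ div_min_le_indivProb hϑ hα hpos
  have hw : ∀ ω ∈ C, hitWeight S NC k ω * G ω = (if ω ∈ A then 2⁻¹ else 1) * G ω₀ := by
    intro ω hω
    have hA_iff : IndivAtHit S NC k ω ↔ ω ∈ A := by
      rw [indivAtHit_iff (h₀.congr hω), hω t le_rfl]; rfl
    simp only [hitWeight, hA_iff, hG ω hω]
  calc ∫⁻ ω in C, hitWeight S NC k ω * G ω ∂μ
      = ∫⁻ ω in C, (if ω ∈ A then 2⁻¹ else 1) * G ω₀ ∂μ := setLIntegral_congr_fun hC hw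
    _ = (∫⁻ ω in C, (if ω ∈ A then 2⁻¹ else 1) ∂μ) * G ω₀ :=
        lintegral_mul_const _ (Measurable.ite hA measurable_const measurable_const)
    _ ≤ ENNReal.ofReal (1 - ϑ / (α + ϑ) / k / 2) * μ C * G ω₀ := by
        gcongr
        exact setLIntegral_ite_inv_two_le hA (measure_ne_top μ C) (by positivity) hCA
    _ = ENNReal.ofReal (1 - ϑ / (α + ϑ) / k / 2) * ∫⁻ ω in C, G ω ∂μ := by
        rw [setLIntegral_congr_fun hC hG, setLIntegral_const, mul_assoc, mul_comm (μ C)]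

theorem lintegral_hitWeight_mul_le [IsFiniteMeasure μ] (hϑ : 0 < ϑ) (hα : 0 < α)
    (hS : ∀ t, Measurable (S t)) (hP : HasIndivEventProb μ S NC ϑ α)
    (hdec : ∀ t ω, minCount S t ω ≤ minCount S (t + 1) ω + 1)
    (hcons : ∀ᵐ ω ∂μ, ∃ t, minCount S t ω = 0) {k : ℕ} (hk : 0 < k)
    (hk0 : ∀ ω, k ≤ minCount S 0 ω) {G : Ω → ℝ≥0∞}
    (hG : ∀ t ω ω', IsFirstHit S k t ω → (∀ s ≤ t, S s ω' = S s ω) → G ω' = G ω) :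
    ∫⁻ ω, hitWeight S NC k ω * G ω ∂μ ≤
      ENNReal.ofReal (1 - ϑ / (α + ϑ) / k / 2) * ∫⁻ ω, G ω ∂μ := by
  let C : (Σ t : ℕ, Fin (t + 1) → ℕ × ℕ) → Set Ω := fun i =>
    {ω | IsFirstHit S k i.1 ω ∧ ∀ s : Fin (i.1 + 1), S s ω = i.2 s}
  refine lintegral_le_mul_of_forall_setLIntegral_le (C := C) (fun i => ?_) ?_ ?_ fun i => ?_
  · exact ((measurable_isFirstHit hS k i.1).and
      (.forall fun s : Fin (i.1 + 1) => (hS s).eq_const _)).setOf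
  · rintro ⟨t, p⟩ ⟨t', p'⟩ hne
    refine Set.disjoint_left.2 fun ω ⟨ht, hp⟩ ⟨ht', hp'⟩ => hne ?_
    obtain rfl := ht.unique ht'
    exact congrArg (Sigma.mk t) (funext fun s => (hp s).symm.trans (hp' s))
  · filter_upwards [hcons] with ω hω
    obtain ⟨t, ht⟩ := exists_isFirstHit (hk0 ω) (fun t => hdec t ω) hω
    exact Set.mem_iUnion.2 ⟨⟨t, fun s => S s ω⟩, ht, fun _ => rfl⟩
  · rcases (C i).eq_empty_or_nonempty with h | ⟨ω₀, h₀, hp₀⟩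
    · simp [h]
    have hCi : C i = cylinder S i.1 ω₀ := by
      ext ω
      exact ⟨fun ⟨_, hp⟩ s hs => (hp ⟨s, by omega⟩).trans (hp₀ ⟨s, by omega⟩).symm,
        fun h => ⟨h₀.congr h, fun s => (h s (by omega)).trans (hp₀ s)⟩⟩
    rw [hCi]
    exact setLIntegral_cylinder_hitWeight_mul_le hϑ hα hS hP hk h₀ fun ω hω => hG _ _ _ h₀ hω

theorem lintegral_prod_hitWeight_le [IsProbabilityMeasure μ] (hϑ : 0 < ϑ) (hα : 0 < α)
    (hS : ∀ t, Measurable (S t)) (hP : HasIndivEventProb μ S NC ϑ α)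
    (hdec : ∀ t ω, minCount S t ω ≤ minCount S (t + 1) ω + 1)
    (hcons : ∀ᵐ ω ∂μ, ∃ t, minCount S t ω = 0) {m : ℕ} (hm0 : ∀ ω, m ≤ minCount S 0 ω)
    {k : ℕ} (hkm : k ≤ m) :
    ∫⁻ ω, ∏ j ∈ Ioc k m, hitWeight S NC j ω ∂μ ≤
      ∏ j ∈ Ioc k m, ENNReal.ofReal (1 - ϑ / (α + ϑ) / j / 2) := by
  induction hkm using Nat.decreasingInduction with
  | self => simp
  | of_succ k hk ih =>
    have hsplit (f : ℕ → ℝ≥0∞) : ∏ j ∈ Ioc k m, f j = f (k + 1) * ∏ j ∈ Ioc (k + 1) m, f j := by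
      rw [← prod_Ioc_consecutive f (Nat.le_succ k) hk, Nat.Ioc_succ_singleton, prod_singleton]
    have hG (t : ℕ) (ω ω' : Ω) (h : IsFirstHit S (k + 1) t ω) (heq : ∀ s ≤ t, S s ω' = S s ω) :
        ∏ j ∈ Ioc (k + 1) m, hitWeight S NC j ω' = ∏ j ∈ Ioc (k + 1) m, hitWeight S NC j ω :=
      prod_congr rfl fun j hj => hitWeight_congr h heq (mem_Ioc.1 hj).1
    simp_rw [hsplit]
    calc ∫⁻ ω, hitWeight S NC (k + 1) ω * ∏ j ∈ Ioc (k + 1) m, hitWeight S NC j ω ∂μ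
        ≤ ENNReal.ofReal (1 - ϑ / (α + ϑ) / (k + 1 : ℕ) / 2) *
            ∫⁻ ω, ∏ j ∈ Ioc (k + 1) m, hitWeight S NC j ω ∂μ :=
          lintegral_hitWeight_mul_le hϑ hα hS hP hdec hcons k.succ_pos
            (fun ω => hk.trans_le (hm0 ω)) hG
      _ ≤ _ := by gcongr

theorem lintegral_prod_hitWeight_le_rpow [IsProbabilityMeasure μ] (hϑ : 0 < ϑ) (hα : 0 < α)
    (hS : ∀ t, Measurable (S t)) (hP : HasIndivEventProb μ S NC ϑ α)
    (hdec : ∀ t ω, minCount S t ω ≤ minCount S (t + 1) ω + 1)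
    (hcons : ∀ᵐ ω ∂μ, ∃ t, minCount S t ω = 0) {m : ℕ} (hm : m ≠ 0)
    (hm0 : ∀ ω, m ≤ minCount S 0 ω) :
    ∫⁻ ω, ∏ j ∈ Ioc 0 m, hitWeight S NC j ω ∂μ ≤
      ENNReal.ofReal ((m : ℝ) ^ (-(ϑ / (α + ϑ) / 2))) := by
  have hc1 : ϑ / (α + ϑ) ≤ 1 := div_le_one_of_le₀ (by linarith) (by positivity)
  refine (lintegral_prod_hitWeight_le hϑ hα hS hP hdec hcons hm0 m.zero_le).trans ?_
  simpa only [div_right_comm] using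
    prod_ofReal_one_sub_div_le_rpow (c := ϑ / (α + ϑ) / 2) (by positivity) (by linarith) hm

theorem measure_compl_indivCount_ge_le (hS : ∀ t, Measurable (S t)) {m : ℕ} (hm : m ≠ 0) {a : ℝ}
    (hZ : ∫⁻ ω, ∏ j ∈ Ioc 0 m, hitWeight S NC j ω ∂μ ≤ ENNReal.ofReal ((m : ℝ) ^ (-a))) :
    μ {ω | ENNReal.ofReal (a / 2 / Real.log 2 * Real.log m) ≤ indivCount NC S ω}ᶜ ≤
      ENNReal.ofReal (1 / (m : ℝ) ^ (a / 2)) := by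
  have hmpos : (0 : ℝ) < m := by positivity
  set ε := ENNReal.ofReal ((m : ℝ) ^ (-(a / 2))) with hεdef
  have hε : ε = ENNReal.ofReal ((2 : ℝ) ^ (-(a / 2 / Real.log 2 * Real.log m))) := by
    rw [hεdef, Real.rpow_def_of_pos hmpos, Real.rpow_def_of_pos two_pos]
    congr 2
    field_simp
  have hbad : {ω | ENNReal.ofReal (a / 2 / Real.log 2 * Real.log m) ≤ indivCount NC S ω}ᶜ ⊆
      {ω | ε ≤ ∏ j ∈ Ioc 0 m, hitWeight S NC j ω} := by
    intro ω hω
    simp only [Set.mem_compl_iff, Set.mem_ofPred_eq, not_le] at hω ⊢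
    have hN := (card_indivAtHit_le_indivCount (NC := NC) (s := Ioc 0 m)
      (fun j hj => (mem_Ioc.1 hj).1) ω).trans_lt hω
    rw [← ENNReal.ofReal_natCast, ENNReal.ofReal_lt_ofReal_iff'] at hN
    rw [hε, prod_hitWeight_eq_pow]
    exact ofReal_two_rpow_neg_le_inv_two_pow hN.1.le
  have hε0 : ε ≠ 0 := (ENNReal.ofReal_pos.2 (Real.rpow_pos_of_pos hmpos _)).ne'
  have hZmeas : Measurable fun ω => ∏ j ∈ Ioc 0 m, hitWeight S NC j ω :=
    Finset.measurable_prod _ fun j _ => measurable_hitWeight hS j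
  calc _ ≤ μ {ω | ε ≤ ∏ j ∈ Ioc 0 m, hitWeight S NC j ω} := measure_mono hbad
    _ ≤ (∫⁻ ω, ∏ j ∈ Ioc 0 m, hitWeight S NC j ω ∂μ) / ε :=
        meas_ge_le_lintegral_div hZmeas.aemeasurable hε0 ENNReal.ofReal_ne_top
    _ ≤ ENNReal.ofReal ((m : ℝ) ^ (-a)) / ε := by gcongr
    _ = ENNReal.ofReal (1 / (m : ℝ) ^ (a / 2)) := by
        rw [← ENNReal.ofReal_div_of_pos (by positivity), ← Real.rpow_sub hmpos, one_div,
          ← Real.rpow_neg hmpos.le]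
        ring_nf

end Conditioning

end LotkaVolterra

open LotkaVolterra

/-- In a two-species Lotka–Volterra jump chain with individual-event rate
`ϑ = β + δ > 0`, interspecific competition rate `α > 0` and no intraspecific
competition, started with minority count `m`, there exist constants `f, g > 0`
(depending only on `α` and `ϑ`) such that the number `I(S)` of individual
(non-competitive) events before consensus satisfies
`Pr[I(S) ≥ f·log m] ≥ 1 − 1/m^g`. -/
theorem stmt_12 (ϑ α : ℝ) (hϑ : 0 < ϑ) (hα : 0 < α) :
    ∃ f g : ℝ, 0 < f ∧ 0 < g ∧
      ∀ (Ω : Type) (_ : MeasurableSpace Ω) (μ : Measure Ω), IsProbabilityMeasure μ →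
      ∀ (S : ℕ → Ω → ℕ × ℕ) (NonComp : ℕ × ℕ → ℕ × ℕ → Prop) (a₀ m : ℕ),
        2 ≤ m → m ≤ a₀ →
        (∀ t, Measurable (S t)) →
        (∀ ω, S 0 ω = (a₀, m)) →
        -- the minority count decreases by at most one in each step
        (∀ t ω, min (S t ω).1 (S t ω).2 ≤ min (S (t + 1) ω).1 (S (t + 1) ω).2 + 1) →
        -- consensus is reached with probability 1
        (μ {ω | ∃ t, min (S t ω).1 (S t ω).2 = 0} = 1) →
        -- in any interior state `(a,b)`, conditionally on any past trajectory, a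
        -- non-competitive (individual) event occurs with probability
        -- `ϑ(a+b)/(αab + ϑ(a+b))`
        (∀ (t : ℕ) (path : ℕ → ℕ × ℕ),
          0 < min (path t).1 (path t).2 →
          μ {ω | ∀ s ≤ t, S s ω = path s} ≠ 0 →
          μ[|{ω | ∀ s ≤ t, S s ω = path s}] {ω | NonComp (path t) (S (t + 1) ω)}
            = ENNReal.ofReal
                (ϑ * ((path t).1 + (path t).2) /
                  (α * (path t).1 * (path t).2 + ϑ * ((path t).1 + (path t).2)))) →
        1 - ENNReal.ofReal (1 / (m : ℝ) ^ g) ≤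
          μ {ω | ENNReal.ofReal (f * Real.log m) ≤ indivCount NonComp S ω} := by
  set c := ϑ / (α + ϑ)
  refine ⟨c / 2 / 2 / Real.log 2, c / 2 / 2, by positivity, by positivity, ?_⟩
  intro Ω _ μ _ S NC a₀ m hm ha₀ hS hS0 hdec hcons hP
  have hm0 : m ≠ 0 := by omega
  have hmin0 : ∀ ω, m ≤ minCount S 0 ω := fun ω => by simp [minCount, hS0, ha₀]
  have hcons' : ∀ᵐ ω ∂μ, ∃ t, minCount S t ω = 0 :=
    (ae_iff_prob_eq_one (.exists fun t => (measurable_minCount hS t).eq_const 0)).2 hcons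
  exact one_sub_le_measure_of_measure_compl_le <| measure_compl_indivCount_ge_le hS hm0 <|
    lintegral_prod_hitWeight_le_rpow hϑ hα hS hP hdec hcons' hm0 hmin0
end

section
/- In the neutral non-self-destructive Lotka–Volterra model with γ = 2α (i.e., α_0 = α_1 and γ_0 = γ_1 = 2α_0), in any state (a,b) with a,b ≥ 1, conditioned on the next event being a competitive interaction, the probability that the count of the first species decreases equals a/(a+b). Consequently ρ(a,b) = a/(a+b) solves the winning-probability recurrence with boundary conditions ρ(a,0)=1 and ρ(0,b)=0. -/
/-- Winning probability candidate `ρ(a,b) = a/(a+b)` with boundary conditions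
`ρ(a,0) = 1` for `a > 0` and `ρ(0,b) = 0`. -/
noncomputable def rhoSol (a b : ℕ) : ℝ :=
  if a = 0 then 0 else if b = 0 then 1 else (a : ℝ) / ((a : ℝ) + (b : ℝ))

/-- In the neutral non-self-destructive Lotka–Volterra model with `γ₀ = γ₁ = 2α₀`
(and `α₀ = α₁`): in any state `(a,b)` with `a, b ≥ 1`, conditioned on the next event
being a competitive interaction, the probability that the first species decreases
equals `a/(a+b)`; consequently `ρ(a,b) = a/(a+b)` solves the winning-probability
recurrence (with boundary conditions `ρ(a,0) = 1`, `ρ(0,b) = 0`). -/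
theorem stmt_16 (β δ α₀ γ₀ : ℝ) (hβ : 0 ≤ β) (hδ : 0 ≤ δ)
    (hα₀ : 0 < α₀) (hγ₀ : γ₀ = 2 * α₀) :
    (∀ a b : ℕ, 1 ≤ a → 1 ≤ b →
      (α₀ * a * b + γ₀ * a * (a - 1) / 2) /
          (2 * α₀ * a * b + γ₀ * a * (a - 1) / 2 + γ₀ * b * (b - 1) / 2)
        = (a : ℝ) / ((a : ℝ) + (b : ℝ))) ∧
    (∀ a b : ℕ, 1 ≤ a → 1 ≤ b → ∀ Z : ℝ,
      Z = 2 * α₀ * a * b + (β + δ) * (a + b)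
            + γ₀ * a * (a - 1) / 2 + γ₀ * b * (b - 1) / 2 →
      0 < Z →
      rhoSol a b =
        (β * a * rhoSol (a + 1) b + β * b * rhoSol a (b + 1)
          + (δ * a + α₀ * a * b + γ₀ * a * (a - 1) / 2) * rhoSol (a - 1) b
          + (δ * b + α₀ * a * b + γ₀ * b * (b - 1) / 2) * rhoSol a (b - 1)) / Z) := by
  subst hγ₀
  constructor
  · intro a b ha hb
    have hA : (1:ℝ) ≤ a := by exact_mod_cast ha
    have hB : (1:ℝ) ≤ b := by exact_mod_cast hb
    have hden : 2 * α₀ * a * b + 2 * α₀ * a * (a - 1) / 2 + 2 * α₀ * b * (b - 1) / 2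
        = α₀ * (((a:ℝ) + b) * ((a:ℝ) + b - 1)) := by ring
    have hpos : (0:ℝ) < α₀ * (((a:ℝ) + b) * ((a:ℝ) + b - 1)) := by
      apply mul_pos hα₀
      apply mul_pos <;> linarith
    have hab : (0:ℝ) < (a:ℝ) + b := by linarith
    rw [hden, div_eq_div_iff (ne_of_gt hpos) (ne_of_gt hab)]
    ring
  · intro a b ha hb Z hZ hZpos
    obtain ⟨a, rfl⟩ := Nat.exists_eq_add_of_le ha
    obtain ⟨b, rfl⟩ := Nat.exists_eq_add_of_le hb
    subst hZ
    rw [eq_div_iff (ne_of_gt hZpos)]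
    rcases a with _ | a <;> rcases b with _ | b <;>
      simp only [rhoSol, Nat.add_sub_cancel_left, Nat.add_sub_cancel, if_true, if_false,
        Nat.succ_ne_zero, Nat.add_eq_zero, one_ne_zero, false_and, and_false, if_neg,
        Nat.cast_add, Nat.cast_one, Nat.cast_ofNat, Nat.cast_zero, reduceIte] <;>
      push_cast <;>
      field_simp <;>
      ring
end
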